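/- arXiv:1611.10293 — 8 statements merged into one kernel-verified Lean document; each statement's English description precedes it below -/
import Mathlib

section
/- Let H : [0,T] × ℝ^k × ℝ^k × ℝ → ℝ be C², let 0 ≤ s < t ≤ T, and for q = (x,y,z) ∈ ℝ^k × ℝ^k × ℝ let τ ↦ φ^{s,τ}(q) = (x(τ,q), y(τ,q), z(τ,q)) solve the characteristic equations on [s,t] with φ^{s,s}(q) = q. Suppose Φ : ℝ^k × ℝ^k × ℝ → ℝ is a generating function for the map φ^{s,t}. Then for every q = (x,y,z): Φ(x, y(t,q), z) = ∫_s^t ( ⟨ẋ(τ,q), y(t,q) − y(τ,q)⟩ + H(τ, φ^{s,τ}(q)) ) dτ. -/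
open RealInnerProductSpace Filter Topology

/-- The partial gradient of the Hamiltonian `H(t,x,y,z)` in the `x` variable. -/
noncomputable def pdx {k : ℕ}
    (H : ℝ → EuclideanSpace ℝ (Fin k) → EuclideanSpace ℝ (Fin k) → ℝ → ℝ)
    (t : ℝ) (x y : EuclideanSpace ℝ (Fin k)) (z : ℝ) : EuclideanSpace ℝ (Fin k) :=
  gradient (fun x' => H t x' y z) x

/-- The partial gradient of the Hamiltonian `H(t,x,y,z)` in the `y` variable. -/
noncomputable def pdy {k : ℕ}
    (H : ℝ → EuclideanSpace ℝ (Fin k) → EuclideanSpace ℝ (Fin k) → ℝ → ℝ)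
    (t : ℝ) (x y : EuclideanSpace ℝ (Fin k)) (z : ℝ) : EuclideanSpace ℝ (Fin k) :=
  gradient (fun y' => H t x y' z) y

/-- The partial derivative of the Hamiltonian `H(t,x,y,z)` in the `z` variable. -/
noncomputable def pdz {k : ℕ}
    (H : ℝ → EuclideanSpace ℝ (Fin k) → EuclideanSpace ℝ (Fin k) → ℝ → ℝ)
    (t : ℝ) (x y : EuclideanSpace ℝ (Fin k)) (z : ℝ) : ℝ :=
  deriv (fun z' => H t x y z') z

/-- The curve `τ ↦ (x τ, y τ, z τ)` solves the characteristic equations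
`ẋ = ∂_yH`, `ẏ = −∂_xH − (∂_zH) y`, `ż = ⟨y, ∂_yH⟩ − H` on the set `I`. -/
def IsCharSol {k : ℕ}
    (H : ℝ → EuclideanSpace ℝ (Fin k) → EuclideanSpace ℝ (Fin k) → ℝ → ℝ)
    (I : Set ℝ) (x y : ℝ → EuclideanSpace ℝ (Fin k)) (z : ℝ → ℝ) : Prop :=
  ∀ τ ∈ I,
    HasDerivAt x (pdy H τ (x τ) (y τ) (z τ)) τ ∧
    HasDerivAt y (-pdx H τ (x τ) (y τ) (z τ) - pdz H τ (x τ) (y τ) (z τ) • y τ) τ ∧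
    HasDerivAt z (⟪y τ, pdy H τ (x τ) (y τ) (z τ)⟫ - H τ (x τ) (y τ) (z τ)) τ

/-- `Φ(x,Y,z)` is a generating function for the contactomorphism `φ`. -/
def IsGenFun {k : ℕ}
    (Φ : EuclideanSpace ℝ (Fin k) → EuclideanSpace ℝ (Fin k) → ℝ → ℝ)
    (φ : EuclideanSpace ℝ (Fin k) × EuclideanSpace ℝ (Fin k) × ℝ →
      EuclideanSpace ℝ (Fin k) × EuclideanSpace ℝ (Fin k) × ℝ) : Prop :=
  (∀ x Y z, 1 - deriv (fun z' => Φ x Y z') z ≠ 0) ∧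
  ∀ x y z X Y Z,
    (X - x = gradient (fun Y' => Φ x Y' z) Y ∧
      Y - y = -gradient (fun x' => Φ x' Y z) x - deriv (fun z' => Φ x Y z') z • y ∧
      Z - z = ⟪Y, X - x⟫ - Φ x Y z)
    ↔ φ (x, y, z) = (X, Y, Z)

/-! The generating relation, read at `q = (x, y, z)` and its image `(X_t, Y_t, Z_t)`, gives
`Φ(x, Y_t, z) = ⟨Y_t, X_t − x⟩ − (Z_t − z)`. Along a characteristic, for a fixed vector `v`,
`d/dτ (⟨v, X(τ)⟩ − Z(τ)) = ⟨∂_yH, v⟩ − ⟨Y(τ), ∂_yH⟩ + H = ⟨∂_yH, v − Y(τ)⟩ + H`,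
so with `v = Y_t` the right-hand side of the formula is, by the fundamental theorem of calculus,
the same difference `(⟨Y_t, X_t⟩ − Z_t) − (⟨Y_t, x⟩ − z)`. -/

section

variable {k : ℕ} {H : ℝ → EuclideanSpace ℝ (Fin k) → EuclideanSpace ℝ (Fin k) → ℝ → ℝ}

theorem continuous_pdy
    (hH : ContDiff ℝ 1 fun p : ℝ × EuclideanSpace ℝ (Fin k) × EuclideanSpace ℝ (Fin k) × ℝ =>
      H p.1 p.2.1 p.2.2.1 p.2.2.2) :
    Continuous fun p : ℝ × EuclideanSpace ℝ (Fin k) × EuclideanSpace ℝ (Fin k) × ℝ =>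
      pdy H p.1 p.2.1 p.2.2.1 p.2.2.2 := by
  set Ĥ := fun p : ℝ × EuclideanSpace ℝ (Fin k) × EuclideanSpace ℝ (Fin k) × ℝ =>
    H p.1 p.2.1 p.2.2.1 p.2.2.2
  set L : EuclideanSpace ℝ (Fin k) →L[ℝ]
      ℝ × EuclideanSpace ℝ (Fin k) × EuclideanSpace ℝ (Fin k) × ℝ :=
    (ContinuousLinearMap.inr ℝ ℝ _).comp
      ((ContinuousLinearMap.inr ℝ (EuclideanSpace ℝ (Fin k)) _).comp
        (ContinuousLinearMap.inl ℝ (EuclideanSpace ℝ (Fin k)) ℝ))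
  have pdy_eq : ∀ p, pdy H p.1 p.2.1 p.2.2.1 p.2.2.2 =
      (InnerProductSpace.toDual ℝ (EuclideanSpace ℝ (Fin k))).symm ((fderiv ℝ Ĥ p).comp L) := by
    intro p
    have slice : HasFDerivAt (fun y' : EuclideanSpace ℝ (Fin k) => (p.1, p.2.1, y', p.2.2.2)) L
        p.2.2.1 := by
      have affine : (fun y' : EuclideanSpace ℝ (Fin k) => (p.1, p.2.1, y', p.2.2.2)) =
          fun y' => (p.1, p.2.1, 0, p.2.2.2) + L y' := by
        funext y'
        simp [L]
      rw [affine]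
      exact L.hasFDerivAt.const_add _
    have hcomp := ((hH.differentiable one_ne_zero) p).hasFDerivAt.comp p.2.2.1 slice
    exact congrArg _ hcomp.fderiv
  rw [funext pdy_eq]
  exact (LinearIsometryEquiv.continuous _).comp
    ((hH.continuous_fderiv one_ne_zero).clm_comp continuous_const)

theorem IsGenFun.apply_eq {Φ : EuclideanSpace ℝ (Fin k) → EuclideanSpace ℝ (Fin k) → ℝ → ℝ}
    {φ : EuclideanSpace ℝ (Fin k) × EuclideanSpace ℝ (Fin k) × ℝ →
      EuclideanSpace ℝ (Fin k) × EuclideanSpace ℝ (Fin k) × ℝ}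
    (hΦ : IsGenFun Φ φ) (q : EuclideanSpace ℝ (Fin k) × EuclideanSpace ℝ (Fin k) × ℝ) :
    Φ q.1 (φ q).2.1 q.2.2 = (⟪(φ q).2.1, (φ q).1⟫ - (φ q).2.2) - (⟪(φ q).2.1, q.1⟫ - q.2.2) := by
  have hZ := ((hΦ.2 q.1 q.2.1 q.2.2 (φ q).1 (φ q).2.1 (φ q).2.2).mpr rfl).2.2
  rw [inner_sub_right] at hZ
  linarith

namespace IsCharSol

variable {I : Set ℝ} {x y : ℝ → EuclideanSpace ℝ (Fin k)} {z : ℝ → ℝ}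

theorem hasDerivAt_inner_sub (hc : IsCharSol H I x y z) {τ : ℝ} (hτ : τ ∈ I)
    (v : EuclideanSpace ℝ (Fin k)) :
    HasDerivAt (fun σ => ⟪v, x σ⟫ - z σ)
      (⟪pdy H τ (x τ) (y τ) (z τ), v - y τ⟫ + H τ (x τ) (y τ) (z τ)) τ := by
  obtain ⟨hx, -, hz⟩ := hc τ hτ
  refine (((hasDerivAt_const τ v).inner ℝ hx).sub hz).congr_deriv ?_
  rw [inner_sub_right, real_inner_comm v, real_inner_comm (y τ), inner_zero_left]
  ring

theorem continuousOn_graph (hc : IsCharSol H I x y z) :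
    ContinuousOn (fun τ => (τ, x τ, y τ, z τ)) I := by
  have hx : ContinuousOn x I := fun τ hτ => (hc τ hτ).1.continuousAt.continuousWithinAt
  have hy : ContinuousOn y I := fun τ hτ => (hc τ hτ).2.1.continuousAt.continuousWithinAt
  have hz : ContinuousOn z I := fun τ hτ => (hc τ hτ).2.2.continuousAt.continuousWithinAt
  exact continuousOn_id.prodMk (hx.prodMk (hy.prodMk hz))

theorem integral_eq_sub {s t : ℝ} (hst : s ≤ t) (hc : IsCharSol H (Set.Icc s t) x y z)
    (hH : ContDiff ℝ 1 fun p : ℝ × EuclideanSpace ℝ (Fin k) × EuclideanSpace ℝ (Fin k) × ℝ =>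
      H p.1 p.2.1 p.2.2.1 p.2.2.2)
    (v : EuclideanSpace ℝ (Fin k)) :
    ∫ τ in s..t, (⟪pdy H τ (x τ) (y τ) (z τ), v - y τ⟫ + H τ (x τ) (y τ) (z τ)) =
      (⟪v, x t⟫ - z t) - (⟪v, x s⟫ - z s) := by
  rw [← Set.uIcc_of_le hst] at hc
  have hy : ContinuousOn y (Set.uIcc s t) :=
    fun τ hτ => (hc τ hτ).2.1.continuousAt.continuousWithinAt
  refine intervalIntegral.integral_eq_sub_of_hasDerivAt
    (fun τ hτ => hc.hasDerivAt_inner_sub hτ v) (ContinuousOn.intervalIntegrable ?_)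
  exact (((continuous_pdy hH).comp_continuousOn hc.continuousOn_graph).inner
    (continuousOn_const.sub hy)).add (hH.continuous.comp_continuousOn hc.continuousOn_graph)

end IsCharSol

end

theorem generating_function_action_formula_general {k : ℕ} (s t : ℝ)
    (hst : s < t)
    (H : ℝ → EuclideanSpace ℝ (Fin k) → EuclideanSpace ℝ (Fin k) → ℝ → ℝ)
    (hH : ContDiff ℝ 2 fun p : ℝ × EuclideanSpace ℝ (Fin k) × EuclideanSpace ℝ (Fin k) × ℝ =>
      H p.1 p.2.1 p.2.2.1 p.2.2.2)
    (X Y : EuclideanSpace ℝ (Fin k) × EuclideanSpace ℝ (Fin k) × ℝ → ℝ →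
      EuclideanSpace ℝ (Fin k))
    (Z : EuclideanSpace ℝ (Fin k) × EuclideanSpace ℝ (Fin k) × ℝ → ℝ → ℝ)
    (hinit : ∀ q, X q s = q.1 ∧ Y q s = q.2.1 ∧ Z q s = q.2.2)
    (hflow : ∀ q, IsCharSol H (Set.Icc s t) (X q) (Y q) (Z q))
    (Φ : EuclideanSpace ℝ (Fin k) → EuclideanSpace ℝ (Fin k) → ℝ → ℝ)
    (hΦ : IsGenFun Φ (fun q => (X q t, Y q t, Z q t))) :
    ∀ q : EuclideanSpace ℝ (Fin k) × EuclideanSpace ℝ (Fin k) × ℝ,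
      Φ q.1 (Y q t) q.2.2 =
        ∫ τ in s..t,
          (⟪pdy H τ (X q τ) (Y q τ) (Z q τ), Y q t - Y q τ⟫ +
            H τ (X q τ) (Y q τ) (Z q τ)) := by
  intro q
  obtain ⟨hx₀, -, hz₀⟩ := hinit q
  rw [(hflow q).integral_eq_sub hst.le (hH.of_le (by norm_num)), hx₀, hz₀]
  exact hΦ.apply_eq q

/-- If `τ ↦ (X q τ, Y q τ, Z q τ)` is the characteristic flow on `[s,t]`
starting from `q` at time `s`, and `Φ` is a generating function for the time-`t` flow map
`φ^{s,t}`, then `Φ(x, y(t,q), z) = ∫_s^t (⟨ẋ(τ,q), y(t,q) − y(τ,q)⟩ + H(τ, φ^{s,τ}(q))) dτ`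
(where `ẋ(τ,q) = ∂_yH` along the flow). -/
theorem generating_function_action_formula {k : ℕ} (T s t : ℝ)
    (hs : 0 ≤ s) (hst : s < t) (htT : t ≤ T)
    (H : ℝ → EuclideanSpace ℝ (Fin k) → EuclideanSpace ℝ (Fin k) → ℝ → ℝ)
    (hH : ContDiff ℝ 2 fun p : ℝ × EuclideanSpace ℝ (Fin k) × EuclideanSpace ℝ (Fin k) × ℝ =>
      H p.1 p.2.1 p.2.2.1 p.2.2.2)
    (X Y : EuclideanSpace ℝ (Fin k) × EuclideanSpace ℝ (Fin k) × ℝ → ℝ →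
      EuclideanSpace ℝ (Fin k))
    (Z : EuclideanSpace ℝ (Fin k) × EuclideanSpace ℝ (Fin k) × ℝ → ℝ → ℝ)
    (hinit : ∀ q, X q s = q.1 ∧ Y q s = q.2.1 ∧ Z q s = q.2.2)
    (hflow : ∀ q, IsCharSol H (Set.Icc s t) (X q) (Y q) (Z q))
    (Φ : EuclideanSpace ℝ (Fin k) → EuclideanSpace ℝ (Fin k) → ℝ → ℝ)
    (hΦ : IsGenFun Φ (fun q => (X q t, Y q t, Z q t))) :
    ∀ q : EuclideanSpace ℝ (Fin k) × EuclideanSpace ℝ (Fin k) × ℝ,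
      Φ q.1 (Y q t) q.2.2 =
        ∫ τ in s..t,
          (⟪pdy H τ (X q τ) (Y q τ) (Z q τ), Y q t - Y q τ⟫ +
            H τ (X q τ) (Y q τ) (Z q τ)) :=
  generating_function_action_formula_general s t hst H hH X Y Z hinit hflow Φ hΦ
end

section
/- Let H : [0,T] × ℝ^k × ℝ^k × ℝ → ℝ be C², fix s, and for q ∈ ℝ^k × ℝ^k × ℝ let τ ↦ φ^{s,τ}(q) = (x(τ,q), y(τ,q), z(τ,q)) solve the characteristic equations with φ^{s,s}(q) = q. Suppose (t', x', Y', z') ↦ Φ^{s,t'}(x', Y', z') is C¹ and for each t' in an interval around t the function Φ^{s,t'} is a generating function for φ^{s,t'}. Then for q = (x,y,z), the partial derivative of t' ↦ Φ^{s,t'}(x, y(t,q), z) at t' = t (with the arguments x, y(t,q), z held fixed) equals H(t, φ^{s,t}(q)). -/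
open RealInnerProductSpace Filter Topology

/-!
Along the characteristic curve through `q = (x, y, z)`, the generating-function relations at
`φ^{s,τ}(q)` give `Φ^{s,τ}(x, y(τ), z) = ⟨y(τ), x(τ) - x⟩ - (z(τ) - z)` and
`∂_YΦ^{s,τ}(x, y(τ), z) = x(τ) - x`. Differentiating the first identity in `τ` with the
characteristic equations, the `⟨y, ∂_yH⟩` terms of `ẋ` and `ż` cancel, leaving `⟨ẏ, x(τ) - x⟩ + H`;
the chain rule writes the same derivative as `∂_τΦ + ⟨∂_YΦ, ẏ⟩ = ∂_τΦ + ⟨x(τ) - x, ẏ⟩`,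
so `∂_τΦ = H`.
-/

section ChainRule

variable {E : Type*} [NormedAddCommGroup E] [InnerProductSpace ℝ E] [CompleteSpace E]

theorem hasDerivAt_deriv_add_inner_gradient {f : ℝ → E → ℝ} {y : ℝ → E}
    {y' : E} {t : ℝ} (hf : DifferentiableAt ℝ (fun p : ℝ × E => f p.1 p.2) (t, y t))
    (hy : HasDerivAt y y' t) :
    HasDerivAt (fun τ => f τ (y τ))
      (deriv (fun τ => f τ (y t)) t + ⟪gradient (f t) (y t), y'⟫) t := by
  set L := fderiv ℝ (fun p : ℝ × E => f p.1 p.2) (t, y t)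
  have hL := hf.hasFDerivAt
  have htime : HasDerivAt (fun τ => f τ (y t)) (L (1, 0)) t :=
    (hL.comp_hasDerivAt t ((hasDerivAt_id t).prodMk (hasDerivAt_const t (y t))) :)
  have hspace : HasFDerivAt (f t) (L.comp (ContinuousLinearMap.inr ℝ ℝ E)) (y t) :=
    hL.comp (y t) ((hasFDerivAt_const t (y t)).prodMk (hasFDerivAt_id (y t)))
  have hcurve : HasDerivAt (fun τ => f τ (y τ)) (L (1, y')) t :=
    (hL.comp_hasDerivAt t ((hasDerivAt_id t).prodMk hy) :)
  rw [htime.deriv, hspace.hasGradientAt.gradient, InnerProductSpace.toDual_symm_apply]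
  convert hcurve using 1
  rw [ContinuousLinearMap.comp_apply, ContinuousLinearMap.inr_apply, ← map_add]
  simp

end ChainRule

section Characteristics

variable {k : ℕ}

theorem IsCharSol.hasDerivAt_inner_sub_sub
    {H : ℝ → EuclideanSpace ℝ (Fin k) → EuclideanSpace ℝ (Fin k) → ℝ → ℝ} {I : Set ℝ}
    {x y : ℝ → EuclideanSpace ℝ (Fin k)} {z : ℝ → ℝ} (hsol : IsCharSol H I x y z) {τ : ℝ}
    (hτ : τ ∈ I) (x₀ : EuclideanSpace ℝ (Fin k)) (z₀ : ℝ) :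
    HasDerivAt (fun τ => ⟪y τ, x τ - x₀⟫ - (z τ - z₀))
      (⟪deriv y τ, x τ - x₀⟫ + H τ (x τ) (y τ) (z τ)) τ := by
  obtain ⟨hx, hy, hz⟩ := hsol τ hτ
  refine ((hy.differentiableAt.hasDerivAt.inner ℝ (hx.sub_const x₀)).sub
    (hz.sub_const z₀)).congr_deriv ?_
  ring

section GeneratingFunction

variable {Φ : EuclideanSpace ℝ (Fin k) → EuclideanSpace ℝ (Fin k) → ℝ → ℝ}
  {φ : EuclideanSpace ℝ (Fin k) × EuclideanSpace ℝ (Fin k) × ℝ →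
    EuclideanSpace ℝ (Fin k) × EuclideanSpace ℝ (Fin k) × ℝ}

theorem IsGenFun.gradient_eq (hΦ : IsGenFun Φ φ) (q) :
    gradient (fun Y' => Φ q.1 Y' q.2.2) (φ q).2.1 = (φ q).1 - q.1 :=
  (((hΦ.2 q.1 q.2.1 q.2.2 _ _ _).mpr rfl).1).symm

theorem IsGenFun.apply_eq_inner_sub_sub (hΦ : IsGenFun Φ φ) (q) :
    Φ q.1 (φ q).2.1 q.2.2 = ⟪(φ q).2.1, (φ q).1 - q.1⟫ - ((φ q).2.2 - q.2.2) := by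
  have := ((hΦ.2 q.1 q.2.1 q.2.2 _ _ _).mpr rfl).2.2
  linarith

end GeneratingFunction

end Characteristics

theorem generating_function_time_derivative_general {k : ℕ} (s t α β : ℝ)
    (hsα : s ≤ α) (hαt : α < t) (htβ : t < β)
    (H : ℝ → EuclideanSpace ℝ (Fin k) → EuclideanSpace ℝ (Fin k) → ℝ → ℝ)
    (X Y : EuclideanSpace ℝ (Fin k) × EuclideanSpace ℝ (Fin k) × ℝ → ℝ →
      EuclideanSpace ℝ (Fin k))
    (Z : EuclideanSpace ℝ (Fin k) × EuclideanSpace ℝ (Fin k) × ℝ → ℝ → ℝ)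
    (hflow : ∀ q, IsCharSol H (Set.Icc s β) (X q) (Y q) (Z q))
    (Φ : ℝ → EuclideanSpace ℝ (Fin k) → EuclideanSpace ℝ (Fin k) → ℝ → ℝ)
    (hΦC1 : ContDiff ℝ 1
      fun p : ℝ × EuclideanSpace ℝ (Fin k) × EuclideanSpace ℝ (Fin k) × ℝ =>
        Φ p.1 p.2.1 p.2.2.1 p.2.2.2)
    (hΦgen : ∀ t' ∈ Set.Ioo α β, IsGenFun (Φ t') fun q => (X q t', Y q t', Z q t')) :
    ∀ q : EuclideanSpace ℝ (Fin k) × EuclideanSpace ℝ (Fin k) × ℝ,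
      deriv (fun t' => Φ t' q.1 (Y q t) q.2.2) t = H t (X q t) (Y q t) (Z q t) := by
  intro q
  have hts : t ∈ Set.Icc s β := ⟨hsα.trans hαt.le, htβ.le⟩
  have hY : HasDerivAt (Y q) (deriv (Y q) t) t :=
    (hflow q t hts).2.1.differentiableAt.hasDerivAt
  have hΦ : DifferentiableAt ℝ (fun p : ℝ × EuclideanSpace ℝ (Fin k) => Φ p.1 q.1 p.2 q.2.2)
      (t, Y q t) :=
    (hΦC1.differentiable one_ne_zero).differentiableAt.comp
      (f := fun p : ℝ × EuclideanSpace ℝ (Fin k) => (p.1, q.1, p.2, q.2.2)) _ (by fun_prop)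
  have hchain := hasDerivAt_deriv_add_inner_gradient (f := fun τ Y' => Φ τ q.1 Y' q.2.2) hΦ hY
  have hgen : (fun τ => Φ τ q.1 (Y q τ) q.2.2) =ᶠ[𝓝 t]
      fun τ => ⟪Y q τ, X q τ - q.1⟫ - (Z q τ - q.2.2) := by
    filter_upwards [Ioo_mem_nhds hαt htβ] with τ hτ
    exact (hΦgen τ hτ).apply_eq_inner_sub_sub q
  have hchar :=
    ((hflow q).hasDerivAt_inner_sub_sub hts q.1 q.2.2).congr_of_eventuallyEq hgen
  have hderiv := hchain.unique hchar
  rw [(hΦgen t ⟨hαt, htβ⟩).gradient_eq q, real_inner_comm] at hderiv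
  linarith

/-- If `Φ^{s,t'}` is a `C¹` family of generating functions for the
characteristic flow maps `φ^{s,t'}` for `t'` in an interval around `t`, then
`∂_{t'} Φ^{s,t'}(x, y(t,q), z) |_{t'=t} = H(t, φ^{s,t}(q))`. -/
theorem generating_function_time_derivative {k : ℕ} (s t α β : ℝ)
    (hsα : s ≤ α) (hαt : α < t) (htβ : t < β)
    (H : ℝ → EuclideanSpace ℝ (Fin k) → EuclideanSpace ℝ (Fin k) → ℝ → ℝ)
    (hH : ContDiff ℝ 2 fun p : ℝ × EuclideanSpace ℝ (Fin k) × EuclideanSpace ℝ (Fin k) × ℝ =>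
      H p.1 p.2.1 p.2.2.1 p.2.2.2)
    (X Y : EuclideanSpace ℝ (Fin k) × EuclideanSpace ℝ (Fin k) × ℝ → ℝ →
      EuclideanSpace ℝ (Fin k))
    (Z : EuclideanSpace ℝ (Fin k) × EuclideanSpace ℝ (Fin k) × ℝ → ℝ → ℝ)
    (hinit : ∀ q, X q s = q.1 ∧ Y q s = q.2.1 ∧ Z q s = q.2.2)
    (hflow : ∀ q, IsCharSol H (Set.Icc s β) (X q) (Y q) (Z q))
    (Φ : ℝ → EuclideanSpace ℝ (Fin k) → EuclideanSpace ℝ (Fin k) → ℝ → ℝ)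
    (hΦC1 : ContDiff ℝ 1
      fun p : ℝ × EuclideanSpace ℝ (Fin k) × EuclideanSpace ℝ (Fin k) × ℝ =>
        Φ p.1 p.2.1 p.2.2.1 p.2.2.2)
    (hΦgen : ∀ t' ∈ Set.Ioo α β, IsGenFun (Φ t') fun q => (X q t', Y q t', Z q t')) :
    ∀ q : EuclideanSpace ℝ (Fin k) × EuclideanSpace ℝ (Fin k) × ℝ,
      deriv (fun t' => Φ t' q.1 (Y q t) q.2.2) t = H t (X q t) (Y q t) (Z q t) :=
  generating_function_time_derivative_general s t α β hsα hαt htβ H X Y Z hflow Φ hΦC1 hΦgen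
end

section
/- Let H : [0,T] × ℝ^k × ℝ^k × ℝ → ℝ be C², fix t, and for r = (X,Y,Z) ∈ ℝ^k × ℝ^k × ℝ let τ ↦ φ^{t,τ}(r) = (x̄(τ,r), ȳ(τ,r), z̄(τ,r)) solve the characteristic equations with φ^{t,t}(r) = r (the flow run from time t). Suppose (s', x', Y', z') ↦ Φ^{s',t}(x', Y', z') is C¹ and for each s' in an interval the function Φ^{s',t} is a generating function for the map φ^{s',t} inverse to φ^{t,s'}. Then for r = (X,Y,Z): the partial derivative of s' ↦ Φ^{s',t}(x̄(s,r), Y, z̄(s,r)) at s' = s (with the arguments x̄(s,r), Y, z̄(s,r) held fixed) equals H(s, φ^{t,s}(r))·(∂_zΦ^{s,t}(x̄(s,r), Y, z̄(s,r)) − 1). -/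
/-!
Along the characteristic through `r`, the generating-function identity for the inverse flow
reads `Φ^{s',t}(x̄(s'), Y, z̄(s')) = ⟨Y, X - x̄(s')⟩ - Z + z̄(s')`, so its total `s'`-derivative
is `ż - ⟨Y, ẋ⟩`. The chain rule writes the same derivative as
`∂_sΦ + ⟨∂_xΦ, ẋ⟩ + ż ∂_zΦ`, and the generating-function identity
`∂_xΦ = (1 - ∂_zΦ) y - Y` together with `ż - ⟨y, ẋ⟩ = -H` leaves `∂_sΦ = H (∂_zΦ - 1)`.
-/

open RealInnerProductSpace Filter Topology

section ChainRule

variable {E F : Type*} [NormedAddCommGroup E] [InnerProductSpace ℝ E] [CompleteSpace E]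
  [NormedAddCommGroup F] [NormedSpace ℝ F]

theorem hasDerivAt_comp_curve_eq_partials {Φ : ℝ → E → F → ℝ → ℝ} {X : ℝ → E} {Z : ℝ → ℝ}
    {v : E} {w s : ℝ} (Y : F)
    (hΦ : DifferentiableAt ℝ (fun p : ℝ × E × F × ℝ => Φ p.1 p.2.1 p.2.2.1 p.2.2.2)
      (s, X s, Y, Z s))
    (hX : HasDerivAt X v s) (hZ : HasDerivAt Z w s) :
    HasDerivAt (fun s' => Φ s' (X s') Y (Z s'))
      (deriv (fun s' => Φ s' (X s) Y (Z s)) s + ⟪gradient (fun x' => Φ s x' Y (Z s)) (X s), v⟫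
        + w * deriv (fun z' => Φ s (X s) Y z') (Z s)) s := by
  have hL := hΦ.hasFDerivAt
  set L := fderiv ℝ (fun p : ℝ × E × F × ℝ => Φ p.1 p.2.1 p.2.2.1 p.2.2.2) (s, X s, Y, Z s)
  have h_time : HasDerivAt (fun s' => Φ s' (X s) Y (Z s)) (L (1, 0, 0, 0)) s := by
    have hc : HasDerivAt (fun s' : ℝ => (s', X s, Y, Z s)) ((1 : ℝ), (0 : E), (0 : F), (0 : ℝ)) s :=
      (hasDerivAt_id' s).prodMk <|
        (hasDerivAt_const _ _).prodMk <| (hasDerivAt_const _ _).prodMk (hasDerivAt_const _ _)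
    exact hL.comp_hasDerivAt s hc
  have h_z : HasDerivAt (fun z' => Φ s (X s) Y z') (L (0, 0, 0, 1)) (Z s) := by
    have hc : HasDerivAt (fun z' : ℝ => (s, X s, Y, z')) ((0 : ℝ), (0 : E), (0 : F), (1 : ℝ))
        (Z s) :=
      (hasDerivAt_const _ _).prodMk <|
        (hasDerivAt_const _ _).prodMk <| (hasDerivAt_const _ _).prodMk (hasDerivAt_id' _)
    exact hL.comp_hasDerivAt (Z s) hc
  have h_x : ⟪gradient (fun x' => Φ s x' Y (Z s)) (X s), v⟫ = L (0, v, 0, 0) := by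
    have hc := (hasFDerivAt_const s (X s)).prodMk <| (hasFDerivAt_id (𝕜 := ℝ) (X s)).prodMk <|
      (hasFDerivAt_const Y (X s)).prodMk (hasFDerivAt_const (Z s) (X s))
    have hx : HasGradientAt (fun x' => Φ s x' Y (Z s)) _ (X s) :=
      (hL.comp (X s) hc :).hasGradientAt
    rw [hx.gradient, InnerProductSpace.toDual_symm_apply]
    simp
  have h_curve : HasDerivAt (fun s' => Φ s' (X s') Y (Z s')) (L (1, v, 0, w)) s := by
    have hc : HasDerivAt (fun s' : ℝ => (s', X s', Y, Z s')) ((1 : ℝ), v, (0 : F), w) s :=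
      (hasDerivAt_id' s).prodMk <| hX.prodMk <| (hasDerivAt_const _ _).prodMk hZ
    exact hL.comp_hasDerivAt s hc
  have h_split : ((1 : ℝ), v, (0 : F), w) = (1, 0, 0, 0) + (0, v, 0, 0) + w • (0, 0, 0, 1) := by
    simp
  rwa [h_time.deriv, h_z.deriv, h_x, ← smul_eq_mul, ← map_smul, ← map_add, ← map_add,
    ← h_split]

end ChainRule

namespace IsGenFun

variable {k : ℕ} {Φ : EuclideanSpace ℝ (Fin k) → EuclideanSpace ℝ (Fin k) → ℝ → ℝ}
  {φ : EuclideanSpace ℝ (Fin k) × EuclideanSpace ℝ (Fin k) × ℝ →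
    EuclideanSpace ℝ (Fin k) × EuclideanSpace ℝ (Fin k) × ℝ}
  {x y X Y : EuclideanSpace ℝ (Fin k)} {z Z : ℝ}

theorem apply_eq_s4 (hΦ : IsGenFun Φ φ) (hφ : φ (x, y, z) = (X, Y, Z)) :
    Φ x Y z = ⟪Y, X - x⟫ - Z + z := by
  linarith [((hΦ.2 x y z X Y Z).mpr hφ).2.2]

theorem gradient_eq_s4 (hΦ : IsGenFun Φ φ) (hφ : φ (x, y, z) = (X, Y, Z)) :
    gradient (fun x' => Φ x' Y z) x = y - Y - deriv (fun z' => Φ x Y z') z • y := by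
  rw [← neg_sub Y y, ((hΦ.2 x y z X Y Z).mpr hφ).2.1]
  abel

end IsGenFun

theorem generating_function_initial_time_derivative_general {k : ℕ} (s t α β : ℝ)
    (hαs : α < s) (hsβ : s < β) (hβt : β ≤ t)
    (H : ℝ → EuclideanSpace ℝ (Fin k) → EuclideanSpace ℝ (Fin k) → ℝ → ℝ)
    (Xb Yb : EuclideanSpace ℝ (Fin k) × EuclideanSpace ℝ (Fin k) × ℝ → ℝ →
      EuclideanSpace ℝ (Fin k))
    (Zb : EuclideanSpace ℝ (Fin k) × EuclideanSpace ℝ (Fin k) × ℝ → ℝ → ℝ)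
    (hflow : ∀ r, IsCharSol H (Set.Icc α t) (Xb r) (Yb r) (Zb r))
    (Φ : ℝ → EuclideanSpace ℝ (Fin k) → EuclideanSpace ℝ (Fin k) → ℝ → ℝ)
    (hΦC1 : ContDiff ℝ 1
      fun p : ℝ × EuclideanSpace ℝ (Fin k) × EuclideanSpace ℝ (Fin k) × ℝ =>
        Φ p.1 p.2.1 p.2.2.1 p.2.2.2)
    (ψ : ℝ → EuclideanSpace ℝ (Fin k) × EuclideanSpace ℝ (Fin k) × ℝ →
      EuclideanSpace ℝ (Fin k) × EuclideanSpace ℝ (Fin k) × ℝ)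
    (hψinv : ∀ s' ∈ Set.Ioo α β,
      Function.LeftInverse (ψ s') (fun r => (Xb r s', Yb r s', Zb r s')) ∧
      Function.RightInverse (ψ s') (fun r => (Xb r s', Yb r s', Zb r s')))
    (hΦgen : ∀ s' ∈ Set.Ioo α β, IsGenFun (Φ s') (ψ s')) :
    ∀ r : EuclideanSpace ℝ (Fin k) × EuclideanSpace ℝ (Fin k) × ℝ,
      deriv (fun s' => Φ s' (Xb r s) r.2.1 (Zb r s)) s =
        H s (Xb r s) (Yb r s) (Zb r s) *
          (deriv (fun z' => Φ s (Xb r s) r.2.1 z') (Zb r s) - 1) := by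
  rintro ⟨X, Y, Z⟩
  set r := (X, Y, Z)
  have hs : s ∈ Set.Ioo α β := ⟨hαs, hsβ⟩
  obtain ⟨hx, -, hz⟩ := hflow r s ⟨hαs.le, hsβ.le.trans hβt⟩
  have h_back : ∀ s' ∈ Set.Ioo α β, ψ s' (Xb r s', Yb r s', Zb r s') = r :=
    fun s' hs' => (hψinv s' hs').1 r
  have h_explicit : (fun s' => Φ s' (Xb r s') Y (Zb r s')) =ᶠ[𝓝 s]
      fun s' => ⟪Y, X - Xb r s'⟫ - Z + Zb r s' := by
    filter_upwards [Ioo_mem_nhds hαs hsβ] with s' hs'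
    exact (hΦgen s' hs').apply_eq_s4 (h_back s' hs')
  have h_along := (((hasDerivAt_const s Y).inner ℝ ((hasDerivAt_const s X).sub hx)).sub_const Z
    |>.add hz).congr_of_eventuallyEq h_explicit
  have h_chain := hasDerivAt_comp_curve_eq_partials Y (hΦC1.differentiable one_ne_zero _) hx hz
  rw [(hΦgen s hs).gradient_eq_s4 (h_back s hs)] at h_chain
  have h_eq := h_chain.unique h_along
  simp only [inner_sub_left, inner_sub_right, real_inner_smul_left, inner_zero_left,
    inner_zero_right] at h_eq
  linear_combination h_eq

/-- Let `τ ↦ (X̄ r τ, Ȳ r τ, Z̄ r τ)` be the characteristic flow run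
from time `t` with value `r` at time `t`, and let `Φ^{s',t}` be a `C¹` family of
generating functions for the maps `φ^{s',t}` inverse to `φ^{t,s'}`, for `s'` in an
interval around `s`.  Then
`∂_{s'} Φ^{s',t}(x̄(s,r), Y, z̄(s,r)) |_{s'=s}
  = H(s, φ^{t,s}(r)) ⋅ (∂_zΦ^{s,t}(x̄(s,r), Y, z̄(s,r)) − 1)`. -/
theorem generating_function_initial_time_derivative {k : ℕ} (s t α β : ℝ)
    (hαs : α < s) (hsβ : s < β) (hβt : β ≤ t)
    (H : ℝ → EuclideanSpace ℝ (Fin k) → EuclideanSpace ℝ (Fin k) → ℝ → ℝ)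
    (hH : ContDiff ℝ 2 fun p : ℝ × EuclideanSpace ℝ (Fin k) × EuclideanSpace ℝ (Fin k) × ℝ =>
      H p.1 p.2.1 p.2.2.1 p.2.2.2)
    (Xb Yb : EuclideanSpace ℝ (Fin k) × EuclideanSpace ℝ (Fin k) × ℝ → ℝ →
      EuclideanSpace ℝ (Fin k))
    (Zb : EuclideanSpace ℝ (Fin k) × EuclideanSpace ℝ (Fin k) × ℝ → ℝ → ℝ)
    (hinit : ∀ r, Xb r t = r.1 ∧ Yb r t = r.2.1 ∧ Zb r t = r.2.2)
    (hflow : ∀ r, IsCharSol H (Set.Icc α t) (Xb r) (Yb r) (Zb r))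
    (Φ : ℝ → EuclideanSpace ℝ (Fin k) → EuclideanSpace ℝ (Fin k) → ℝ → ℝ)
    (hΦC1 : ContDiff ℝ 1
      fun p : ℝ × EuclideanSpace ℝ (Fin k) × EuclideanSpace ℝ (Fin k) × ℝ =>
        Φ p.1 p.2.1 p.2.2.1 p.2.2.2)
    (ψ : ℝ → EuclideanSpace ℝ (Fin k) × EuclideanSpace ℝ (Fin k) × ℝ →
      EuclideanSpace ℝ (Fin k) × EuclideanSpace ℝ (Fin k) × ℝ)
    (hψinv : ∀ s' ∈ Set.Ioo α β,
      Function.LeftInverse (ψ s') (fun r => (Xb r s', Yb r s', Zb r s')) ∧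
      Function.RightInverse (ψ s') (fun r => (Xb r s', Yb r s', Zb r s')))
    (hΦgen : ∀ s' ∈ Set.Ioo α β, IsGenFun (Φ s') (ψ s')) :
    ∀ r : EuclideanSpace ℝ (Fin k) × EuclideanSpace ℝ (Fin k) × ℝ,
      deriv (fun s' => Φ s' (Xb r s) r.2.1 (Zb r s)) s =
        H s (Xb r s) (Yb r s) (Zb r s) *
          (deriv (fun z' => Φ s (Xb r s) r.2.1 z') (Zb r s) - 1) :=
  generating_function_initial_time_derivative_general s t α β hαs hsβ hβt H Xb Yb Zb hflow Φ hΦC1 ψ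
    hψinv hΦgen
end

section
/- Let φ_1, …, φ_N be bijections of ℝ^k × ℝ^k × ℝ, and for each j let Φ_j : ℝ^k × ℝ^k × ℝ → ℝ be a C¹ generating function for φ_j. Let v : ℝ^k → ℝ be C². For x = x_N ∈ ℝ^k and ξ = (x_0, …, x_{N−1}, y_1, …, y_N) ∈ (ℝ^k)^N × (ℝ^k)^N, define inductively z_0 = v(x_0) and z_j = z_{j−1} + ⟨y_j, x_j − x_{j−1}⟩ − Φ_j(x_{j−1}, y_j, z_{j−1}) for 1 ≤ j ≤ N, and set S(x; ξ) = v(x_0) + Σ_{j=1}^N ( ⟨y_j, x_j − x_{j−1}⟩ − Φ_j(x_{j−1}, y_j, z_{j−1}) ), i.e. S(x;ξ) = z_N. Then S is a generating family of the composition: { (x, ∂_xS(x;ξ), S(x;ξ)) : ∂_ξS(x;ξ) = 0 } = (φ_N ∘ ⋯ ∘ φ_1)( { (x_0, Dv(x_0), v(x_0)) : x_0 ∈ ℝ^k } ). -/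
open RealInnerProductSpace Filter Topology

/-- The sequence `x_0, …, x_{N−1}, x_N = x`, padded: `Xc x xv j = x_j` for `j < N` and `x`
for `j = N`. -/
def Xc {k N : ℕ} (x : EuclideanSpace ℝ (Fin k)) (xv : Fin N → EuclideanSpace ℝ (Fin k))
    (j : ℕ) : EuclideanSpace ℝ (Fin k) :=
  if h : j < N then xv ⟨j, h⟩ else x

/-- The sequence `y_1, …, y_N` (0-indexed): `Yc yv j = y_{j+1}`. -/
def Yc {k N : ℕ} (yv : Fin N → EuclideanSpace ℝ (Fin k)) (j : ℕ) :
    EuclideanSpace ℝ (Fin k) :=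
  if h : j < N then yv ⟨j, h⟩ else 0

/-- The sequence of generating functions `Φ_1, …, Φ_N` (0-indexed). -/
def Φc {k N : ℕ}
    (Φ : Fin N → (EuclideanSpace ℝ (Fin k) → EuclideanSpace ℝ (Fin k) → ℝ → ℝ)) (j : ℕ) :
    EuclideanSpace ℝ (Fin k) → EuclideanSpace ℝ (Fin k) → ℝ → ℝ :=
  if h : j < N then Φ ⟨j, h⟩ else fun _ _ _ => 0

/-- The inductively defined quantities `z_0 = v(x_0)`,
`z_j = z_{j−1} + ⟨y_j, x_j − x_{j−1}⟩ − Φ_j(x_{j−1}, y_j, z_{j−1})`.  In particular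
`zrec Φ v x xv yv N` is the generating family `S(x; ξ)`, `ξ = (x_0,…,x_{N−1},y_1,…,y_N)`. -/
noncomputable def zrec {k N : ℕ}
    (Φ : Fin N → (EuclideanSpace ℝ (Fin k) → EuclideanSpace ℝ (Fin k) → ℝ → ℝ))
    (v : EuclideanSpace ℝ (Fin k) → ℝ) (x : EuclideanSpace ℝ (Fin k))
    (xv yv : Fin N → EuclideanSpace ℝ (Fin k)) : ℕ → ℝ
  | 0 => v (Xc x xv 0)
  | j + 1 => zrec Φ v x xv yv j + ⟪Yc yv j, Xc x xv (j + 1) - Xc x xv j⟫ -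
      Φc Φ j (Xc x xv j) (Yc yv j) (zrec Φ v x xv yv j)

/-- Iterated composition: `compAll φ N = φ_{N−1} ∘ ⋯ ∘ φ_0`. -/
def compAll {α : Type*} (φ : ℕ → (α → α)) : ℕ → (α → α)
  | 0 => id
  | j + 1 => φ j ∘ compAll φ j

/-!
Write `p_j = (x_j, y_j, z_j)` for the points of the chain, with `y_0 = Dv(x_0)` and `x_N = x`.
The derivative of `z_j` in `ξ` differs from `⟨y_j, ∂_ξ x_j⟩` by a one-form `ω_j`, the pull-back
of the contact form `dz - ⟨y, dx⟩`. Step `j` multiplies `ω_{j-1}` by the conformal factor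
`1 - ∂_zΦ_j` and adds `⟨A_j, dy_j⟩ + ⟨B_j, dx_{j-1}⟩`, where `A_j = 0` and `B_j = 0` are the first
two generating equations for `φ_j(p_{j-1}) = p_j`; the third holds by definition of `z_j`.
As `ω_{j-1}` does not involve `x_{j-1}` or `y_j` and the conformal factors never vanish,
`∂_ξS = ω_N` vanishes iff all `A_j`, `B_j` do, i.e. iff `(p_j)` is an orbit of the `φ_j`
starting on `j¹v`. Finally `∂_xS = y_N`, since `x` enters `S` only through the last step.
-/

local notation "𝔼" k:max => EuclideanSpace ℝ (Fin k)

section GeneratingStep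

variable {E₁ E₂ : Type*} [NormedAddCommGroup E₁] [InnerProductSpace ℝ E₁] [CompleteSpace E₁]
  [NormedAddCommGroup E₂] [InnerProductSpace ℝ E₂] [CompleteSpace E₂]

open ContinuousLinearMap in
theorem fderiv_uncurry₃_apply {F : E₁ → E₂ → ℝ → ℝ} {a : E₁} {b : E₂} {c : ℝ}
    (hF : DifferentiableAt ℝ (fun p : E₁ × E₂ × ℝ => F p.1 p.2.1 p.2.2) (a, b, c))
    (u : E₁) (w : E₂) (s : ℝ) :
    fderiv ℝ (fun p : E₁ × E₂ × ℝ => F p.1 p.2.1 p.2.2) (a, b, c) (u, w, s) =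
      ⟪gradient (fun x => F x b c) a, u⟫ + ⟪gradient (fun y => F a y c) b, w⟫ +
        s * deriv (fun z => F a b z) c := by
  have hL := hF.hasFDerivAt
  set L := fderiv ℝ (fun p : E₁ × E₂ × ℝ => F p.1 p.2.1 p.2.2) (a, b, c)
  have hx : HasFDerivAt (fun x => F x b c) (L.comp (inl ℝ E₁ (E₂ × ℝ))) a := by
    have := hL.comp a (hasFDerivAt_prodMk_left (𝕜 := ℝ) a (b, c))
    exact this
  have hy : HasFDerivAt (fun y => F a y c)
      (L.comp ((inr ℝ E₁ (E₂ × ℝ)).comp (inl ℝ E₂ ℝ))) b := by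
    have := hL.comp b ((hasFDerivAt_prodMk_right (𝕜 := ℝ) a (b, c)).comp b
      (hasFDerivAt_prodMk_left (𝕜 := ℝ) b c))
    exact this
  have hz : HasDerivAt (fun z => F a b z) (L (0, 0, 1)) c := by
    have := hL.comp c ((hasFDerivAt_prodMk_right (𝕜 := ℝ) a (b, c)).comp c
      (hasFDerivAt_prodMk_right (𝕜 := ℝ) b c))
    exact this.hasDerivAt
  have hsplit : ((u, w, s) : E₁ × E₂ × ℝ) = (u, 0, 0) + (0, w, 0) + s • (0, 0, 1) := by simp
  rw [gradient, gradient, hx.fderiv, hy.fderiv, hz.deriv, InnerProductSpace.toDual_symm_apply,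
    InnerProductSpace.toDual_symm_apply, hsplit, map_add, map_add, map_smul, smul_eq_mul]
  rfl

variable {E V : Type*} [NormedAddCommGroup E] [InnerProductSpace ℝ E] [CompleteSpace E]
  [NormedAddCommGroup V] [NormedSpace ℝ V]

noncomputable def genDefectX (F : E → E → ℝ → ℝ) (x : E) (z : ℝ) (X Y : E) : E :=
  X - x - gradient (fun Y' => F x Y' z) Y

noncomputable def genDefectY (F : E → E → ℝ → ℝ) (x y : E) (z : ℝ) (Y : E) : E :=
  (1 - deriv (fun z' => F x Y z') z) • y - Y - gradient (fun x' => F x' Y z) x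

theorem HasFDerivAt.generatingStep {F : E → E → ℝ → ℝ} {X X' Y : V → E} {z : V → ℝ}
    {dX dX' dY : V →L[ℝ] E} {ω : V →L[ℝ] ℝ} {e : E} {ξ : V}
    (hz : HasFDerivAt z (ω + (innerSL ℝ e).comp dX) ξ)
    (hF : DifferentiableAt ℝ (fun p : E × E × ℝ => F p.1 p.2.1 p.2.2) (X ξ, Y ξ, z ξ))
    (hX : HasFDerivAt X dX ξ) (hY : HasFDerivAt Y dY ξ) (hX' : HasFDerivAt X' dX' ξ) :
    HasFDerivAt (fun ξ => z ξ + ⟪Y ξ, X' ξ - X ξ⟫ - F (X ξ) (Y ξ) (z ξ))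
      ((1 - deriv (fun z' => F (X ξ) (Y ξ) z') (z ξ)) • ω +
        (innerSL ℝ (genDefectX F (X ξ) (z ξ) (X' ξ) (Y ξ))).comp dY +
        (innerSL ℝ (genDefectY F (X ξ) e (z ξ) (Y ξ))).comp dX +
        (innerSL ℝ (Y ξ)).comp dX') ξ := by
  have hF' := hF.hasFDerivAt.comp ξ (hX.prodMk (hY.prodMk hz))
  refine ((hz.add (hY.inner ℝ (hX'.sub hX))).sub hF').congr_fderiv ?_
  ext d
  simp only [add_apply, sub_apply, smul_apply, ContinuousLinearMap.comp_apply,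
    ContinuousLinearMap.prod_apply, fderivInnerCLM_apply, innerSL_apply_apply, Pi.sub_apply,
    fderiv_uncurry₃_apply hF, genDefectX, genDefectY, inner_sub_left, inner_sub_right,
    real_inner_smul_left, smul_eq_mul]
  rw [real_inner_comm (X' ξ), real_inner_comm (X ξ)]
  ring

end GeneratingStep

theorem IsGenFun.apply_eq_iff {k : ℕ} {Φ : 𝔼 k → 𝔼 k → ℝ → ℝ}
    {φ : 𝔼 k × 𝔼 k × ℝ → 𝔼 k × 𝔼 k × ℝ} (hgen : IsGenFun Φ φ) {x y X Y : 𝔼 k} {z Z : ℝ} :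
    φ (x, y, z) = (X, Y, Z) ↔
      genDefectX Φ x z X Y = 0 ∧ genDefectY Φ x y z Y = 0 ∧ Z = z + ⟪Y, X - x⟫ - Φ x Y z := by
  have hY : genDefectY Φ x y z Y =
      -(Y - y - (-gradient (fun x' => Φ x' Y z) x - deriv (fun z' => Φ x Y z') z • y)) := by
    rw [genDefectY, sub_smul, one_smul]
    abel
  rw [← hgen.2, genDefectX, hY, neg_eq_zero, sub_eq_zero, sub_eq_zero,
    sub_eq_iff_eq_add' (a := Z), add_sub_assoc]

theorem compAll_apply_eq_of_forall_lt {α : Type*} {f : ℕ → α → α} {p : ℕ → α} {n : ℕ}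
    (h : ∀ j < n, f j (p j) = p (j + 1)) : compAll f n (p 0) = p n := by
  induction n with
  | zero => rfl
  | succ n ih =>
    rw [compAll, Function.comp_apply, ih fun j hj => h j (by omega), h n n.lt_succ_self]

section Chain

variable {k N : ℕ}

noncomputable def dXc (j : ℕ) : (Fin N → 𝔼 k) × (Fin N → 𝔼 k) →L[ℝ] 𝔼 k :=
  if h : j < N then
    (ContinuousLinearMap.proj (R := ℝ) (φ := fun _ : Fin N => 𝔼 k) ⟨j, h⟩).comp (.fst ℝ _ _)
  else 0

noncomputable def dYc (j : ℕ) : (Fin N → 𝔼 k) × (Fin N → 𝔼 k) →L[ℝ] 𝔼 k :=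
  if h : j < N then
    (ContinuousLinearMap.proj (R := ℝ) (φ := fun _ : Fin N => 𝔼 k) ⟨j, h⟩).comp (.snd ℝ _ _)
  else 0

theorem dXc_apply (j : ℕ) (d : (Fin N → 𝔼 k) × (Fin N → 𝔼 k)) :
    dXc (k := k) j d = Xc 0 d.1 j := by
  unfold dXc Xc
  split_ifs <;> rfl

theorem dYc_apply (j : ℕ) (d : (Fin N → 𝔼 k) × (Fin N → 𝔼 k)) :
    dYc (k := k) j d = Yc d.2 j := by
  unfold dYc Yc
  split_ifs <;> rfl

theorem hasFDerivAt_Xc (x : 𝔼 k) (j : ℕ) (ξ : (Fin N → 𝔼 k) × (Fin N → 𝔼 k)) :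
    HasFDerivAt (fun ξ : (Fin N → 𝔼 k) × (Fin N → 𝔼 k) => Xc x ξ.1 j) (dXc j) ξ := by
  unfold Xc dXc
  split_ifs
  · exact (hasFDerivAt_apply (𝕜 := ℝ) _ _).comp ξ (hasFDerivAt_fst (𝕜 := ℝ))
  · exact hasFDerivAt_const x ξ

theorem hasFDerivAt_Yc (j : ℕ) (ξ : (Fin N → 𝔼 k) × (Fin N → 𝔼 k)) :
    HasFDerivAt (fun ξ : (Fin N → 𝔼 k) × (Fin N → 𝔼 k) => Yc ξ.2 j) (dYc j) ξ := by
  unfold Yc dYc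
  split_ifs
  · exact (hasFDerivAt_apply (𝕜 := ℝ) _ _).comp ξ (hasFDerivAt_snd (𝕜 := ℝ))
  · exact hasFDerivAt_const 0 ξ

theorem Xc_single_of_lt {m : Fin N} {j : ℕ} (hj : j < m) (x u : 𝔼 k) :
    Xc x (Pi.single m u) j = 0 := by
  rw [Xc, dif_pos (hj.trans m.isLt)]
  simp [Fin.ext_iff, hj.ne]

theorem Yc_single_of_lt {m : Fin N} {j : ℕ} (hj : j < m) (u : 𝔼 k) :
    Yc (Pi.single m u) j = 0 := by
  rw [Yc, dif_pos (hj.trans m.isLt)]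
  simp [Fin.ext_iff, hj.ne]

theorem Xc_single_self {j : ℕ} (hj : j < N) (x u : 𝔼 k) :
    Xc x (Pi.single ⟨j, hj⟩ u) j = u := by
  rw [Xc, dif_pos hj, Pi.single_eq_same]

theorem Yc_single_self {j : ℕ} (hj : j < N) (u : 𝔼 k) :
    Yc (Pi.single ⟨j, hj⟩ u) j = u := by
  rw [Yc, dif_pos hj, Pi.single_eq_same]

variable (Φ : Fin N → (𝔼 k → 𝔼 k → ℝ → ℝ)) (v : 𝔼 k → ℝ) (x : 𝔼 k) (xv yv : Fin N → 𝔼 k)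

noncomputable def momentum : ℕ → 𝔼 k
  | 0 => gradient v (Xc x xv 0)
  | j + 1 => Yc yv j

noncomputable def chainPoint (j : ℕ) : 𝔼 k × 𝔼 k × ℝ :=
  (Xc x xv j, momentum v x xv yv j, zrec Φ v x xv yv j)

noncomputable def conformalFactor (j : ℕ) : ℝ :=
  1 - deriv (fun z' => Φc Φ j (Xc x xv j) (Yc yv j) z') (zrec Φ v x xv yv j)

noncomputable def stepDefectX (j : ℕ) : 𝔼 k :=
  genDefectX (Φc Φ j) (Xc x xv j) (zrec Φ v x xv yv j) (Xc x xv (j + 1)) (Yc yv j)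

noncomputable def stepDefectY (j : ℕ) : 𝔼 k :=
  genDefectY (Φc Φ j) (Xc x xv j) (momentum v x xv yv j) (zrec Φ v x xv yv j) (Yc yv j)

/-- By `hasFDerivAt_zrec`, `contactDefect j = ∂_ξ z_j - ⟨y_j, ∂_ξ x_j⟩` at `ξ = (xv, yv)`. -/
noncomputable def contactDefect : ℕ → (Fin N → 𝔼 k) × (Fin N → 𝔼 k) →L[ℝ] ℝ
  | 0 => 0
  | j + 1 => conformalFactor Φ v x xv yv j • contactDefect j +
      (innerSL ℝ (stepDefectX Φ v x xv yv j)).comp (dYc j) +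
      (innerSL ℝ (stepDefectY Φ v x xv yv j)).comp (dXc j)

theorem differentiable_Φc
    (hΦ : ∀ j, Differentiable ℝ fun p : 𝔼 k × 𝔼 k × ℝ => Φ j p.1 p.2.1 p.2.2) (j : ℕ) :
    Differentiable ℝ fun p : 𝔼 k × 𝔼 k × ℝ => Φc Φ j p.1 p.2.1 p.2.2 := by
  unfold Φc
  split_ifs
  · exact hΦ _
  · exact differentiable_const 0

theorem hasFDerivAt_zrec
    (hΦ : ∀ j, Differentiable ℝ fun p : 𝔼 k × 𝔼 k × ℝ => Φ j p.1 p.2.1 p.2.2)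
    (hv : Differentiable ℝ v) (j : ℕ) :
    HasFDerivAt (fun ξ : (Fin N → 𝔼 k) × (Fin N → 𝔼 k) => zrec Φ v x ξ.1 ξ.2 j)
      (contactDefect Φ v x xv yv j + (innerSL ℝ (momentum v x xv yv j)).comp (dXc j))
      (xv, yv) := by
  induction j with
  | zero =>
    rw [contactDefect, zero_add]
    exact (hv _).hasGradientAt.hasFDerivAt.comp (xv, yv) (hasFDerivAt_Xc x 0 (xv, yv))
  | succ j ih =>
    have := ih.generatingStep (differentiable_Φc Φ hΦ j _) (hasFDerivAt_Xc x j _)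
      (hasFDerivAt_Yc j _) (hasFDerivAt_Xc x (j + 1) _)
    rw [contactDefect, momentum]
    exact this

theorem fderiv_zrec_eq_contactDefect
    (hΦ : ∀ j, Differentiable ℝ fun p : 𝔼 k × 𝔼 k × ℝ => Φ j p.1 p.2.1 p.2.2)
    (hv : Differentiable ℝ v) :
    fderiv ℝ (fun ξ : (Fin N → 𝔼 k) × (Fin N → 𝔼 k) => zrec Φ v x ξ.1 ξ.2 N) (xv, yv) =
      contactDefect Φ v x xv yv N := by
  rw [(hasFDerivAt_zrec Φ v x xv yv hΦ hv N).fderiv, dXc, dif_neg (lt_irrefl N),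
    ContinuousLinearMap.comp_zero, add_zero]

theorem contactDefect_apply_single {j : ℕ} {m : Fin N} (hjm : j ≤ m) (u w : 𝔼 k) :
    contactDefect Φ v x xv yv j (Pi.single m u, Pi.single m w) = 0 := by
  induction j with
  | zero => rfl
  | succ j ih =>
    have hj : j < m := hjm
    simp only [contactDefect, add_apply, smul_apply, ContinuousLinearMap.comp_apply, dXc_apply,
      dYc_apply, Xc_single_of_lt hj, Yc_single_of_lt hj, ih hj.le, smul_zero, map_zero, add_zero]

theorem stepDefect_eq_zero_of_contactDefect_succ_eq_zero {j : ℕ} (hj : j < N)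
    (hc : conformalFactor Φ v x xv yv j ≠ 0) (h : contactDefect Φ v x xv yv (j + 1) = 0) :
    contactDefect Φ v x xv yv j = 0 ∧ stepDefectX Φ v x xv yv j = 0 ∧
      stepDefectY Φ v x xv yv j = 0 := by
  rw [contactDefect] at h
  generalize stepDefectX Φ v x xv yv j = A at h ⊢
  generalize stepDefectY Φ v x xv yv j = B at h ⊢
  have hAB : ⟪A, A⟫ + ⟪B, B⟫ = 0 := by
    simpa only [add_apply, smul_apply, ContinuousLinearMap.comp_apply, dXc_apply, dYc_apply,
      Xc_single_self, Yc_single_self, contactDefect_apply_single Φ v x xv yv (m := ⟨j, hj⟩) le_rfl,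
      smul_zero, zero_add, innerSL_apply_apply, zero_apply]
      using congrArg (· (Pi.single ⟨j, hj⟩ B, Pi.single ⟨j, hj⟩ A)) h
  rw [add_eq_zero_iff_of_nonneg real_inner_self_nonneg real_inner_self_nonneg,
    inner_self_eq_zero, inner_self_eq_zero] at hAB
  refine ⟨?_, hAB⟩
  simp only [hAB.1, hAB.2, map_zero, ContinuousLinearMap.zero_comp, add_zero, smul_eq_zero] at h
  exact h.resolve_left hc

theorem contactDefect_eq_zero_iff (hc : ∀ j < N, conformalFactor Φ v x xv yv j ≠ 0) :
    contactDefect Φ v x xv yv N = 0 ↔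
      ∀ j < N, stepDefectX Φ v x xv yv j = 0 ∧ stepDefectY Φ v x xv yv j = 0 := by
  constructor
  · intro h j hj
    have hall : ∀ i ≤ N, contactDefect Φ v x xv yv i = 0 := fun i hi =>
      Nat.decreasingInduction (fun i hi ih =>
        (stepDefect_eq_zero_of_contactDefect_succ_eq_zero Φ v x xv yv hi (hc i hi) ih).1) h hi
    exact (stepDefect_eq_zero_of_contactDefect_succ_eq_zero Φ v x xv yv hj (hc j hj)
      (hall (j + 1) hj)).2
  · intro h
    suffices ∀ i ≤ N, contactDefect Φ v x xv yv i = 0 from this N le_rfl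
    intro i hi
    induction i with
    | zero => rfl
    | succ i ih =>
      rw [contactDefect, ih (by omega), (h i hi).1, (h i hi).2]
      simp

theorem apply_chainPoint_eq_iff {φ : Fin N → (𝔼 k × 𝔼 k × ℝ → 𝔼 k × 𝔼 k × ℝ)}
    (hgen : ∀ j, IsGenFun (Φ j) (φ j)) {j : ℕ} (hj : j < N) :
    φ ⟨j, hj⟩ (chainPoint Φ v x xv yv j) = chainPoint Φ v x xv yv (j + 1) ↔
      stepDefectX Φ v x xv yv j = 0 ∧ stepDefectY Φ v x xv yv j = 0 := by
  have hΦ : Φc Φ j = Φ ⟨j, hj⟩ := dif_pos hj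
  rw [chainPoint, chainPoint, (hgen ⟨j, hj⟩).apply_eq_iff, stepDefectX, stepDefectY, hΦ,
    momentum, zrec, hΦ]
  simp

theorem fderiv_zrec_eq_zero_iff {φ : Fin N → (𝔼 k × 𝔼 k × ℝ → 𝔼 k × 𝔼 k × ℝ)}
    (hΦ : ∀ j, Differentiable ℝ fun p : 𝔼 k × 𝔼 k × ℝ => Φ j p.1 p.2.1 p.2.2)
    (hgen : ∀ j, IsGenFun (Φ j) (φ j)) (hv : Differentiable ℝ v) :
    fderiv ℝ (fun ξ : (Fin N → 𝔼 k) × (Fin N → 𝔼 k) => zrec Φ v x ξ.1 ξ.2 N) (xv, yv) = 0 ↔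
      ∀ j (hj : j < N),
        φ ⟨j, hj⟩ (chainPoint Φ v x xv yv j) = chainPoint Φ v x xv yv (j + 1) := by
  have hc : ∀ j < N, conformalFactor Φ v x xv yv j ≠ 0 := fun j hj => by
    rw [conformalFactor, Φc, dif_pos hj]
    exact (hgen ⟨j, hj⟩).1 _ _ _
  rw [fderiv_zrec_eq_contactDefect Φ v x xv yv hΦ hv, contactDefect_eq_zero_iff Φ v x xv yv hc]
  exact forall₂_congr fun j hj => (apply_chainPoint_eq_iff Φ v x xv yv hgen hj).symm

theorem zrec_eq_of_lt (x' : 𝔼 k) {j : ℕ} (hj : j < N) :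
    zrec Φ v x' xv yv j = zrec Φ v x xv yv j := by
  induction j with
  | zero => simp [zrec, Xc, hj]
  | succ j ih => simp [zrec, Xc, hj, ih (by omega), (by omega : j < N)]

theorem gradient_zrec_last :
    gradient (fun x' => zrec Φ v x' xv yv N) x = momentum v x xv yv N := by
  cases N with
  | zero => rfl
  | succ n =>
    have hlin : (fun x' => zrec Φ v x' xv yv (n + 1)) = fun x' => ⟪Yc yv n, x'⟫ +
        (zrec Φ v x xv yv n - ⟪Yc yv n, Xc x xv n⟫ -
          Φc Φ n (Xc x xv n) (Yc yv n) (zrec Φ v x xv yv n)) := by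
      ext x'
      rw [zrec, zrec_eq_of_lt Φ v x xv yv x' n.lt_succ_self]
      simp only [Xc, n.lt_succ_self, lt_irrefl, dite_true, dite_false, inner_sub_right]
      ring
    rw [hlin]
    exact (hasGradientAt_iff_hasFDerivAt.2
      ((InnerProductSpace.toDual ℝ _ (Yc yv n)).hasFDerivAt.add_const _)).gradient

theorem chainPoint_last :
    chainPoint Φ v x xv yv N =
      (x, gradient (fun x' => zrec Φ v x' xv yv N) x, zrec Φ v x xv yv N) := by
  rw [chainPoint, gradient_zrec_last, Xc, dif_neg (lt_irrefl N)]

theorem chainPoint_of_orbit {φ : Fin N → (𝔼 k × 𝔼 k × ℝ → 𝔼 k × 𝔼 k × ℝ)}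
    (hgen : ∀ j, IsGenFun (Φ j) (φ j)) {P : ℕ → 𝔼 k × 𝔼 k × ℝ} {x₀ : 𝔼 k}
    (h₀ : P 0 = (x₀, gradient v x₀, v x₀)) (hP : ∀ j (hj : j < N), φ ⟨j, hj⟩ (P j) = P (j + 1)) :
    ∀ j ≤ N, chainPoint Φ v (P N).1 (fun m => (P m).1) (fun m => (P (m + 1)).2.1) j = P j := by
  have hX : ∀ i ≤ N, Xc (P N).1 (fun m : Fin N => (P m).1) i = (P i).1 := by
    intro i hi
    obtain hi | rfl := hi.lt_or_eq
    · exact dif_pos hi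
    · exact dif_neg (lt_irrefl i)
  intro j hj
  induction j with
  | zero =>
    rw [chainPoint, momentum, zrec, hX 0 hj, h₀]
  | succ j ih =>
    have hj' : j < N := hj
    have hY : Yc (fun m : Fin N => (P (m + 1)).2.1) j = (P (j + 1)).2.1 := dif_pos hj'
    have hz := ((hgen ⟨j, hj'⟩).apply_eq_iff.1 (hP j hj')).2.2
    have hzj : zrec Φ v (P N).1 (fun m : Fin N => (P m).1) (fun m : Fin N => (P (m + 1)).2.1) j =
        (P j).2.2 := congrArg (·.2.2) (ih hj'.le)
    rw [chainPoint, momentum, zrec, hX j hj'.le, hX (j + 1) hj, hY, hzj, Φc, dif_pos hj', ← hz]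

end Chain

theorem generating_family_of_composition_general {k N : ℕ}
    (φ : Fin N → (EuclideanSpace ℝ (Fin k) × EuclideanSpace ℝ (Fin k) × ℝ →
      EuclideanSpace ℝ (Fin k) × EuclideanSpace ℝ (Fin k) × ℝ))
    (Φ : Fin N → (EuclideanSpace ℝ (Fin k) → EuclideanSpace ℝ (Fin k) → ℝ → ℝ))
    (hΦC1 : ∀ j, ContDiff ℝ 1
      fun p : EuclideanSpace ℝ (Fin k) × EuclideanSpace ℝ (Fin k) × ℝ =>
        Φ j p.1 p.2.1 p.2.2)
    (hgen : ∀ j, IsGenFun (Φ j) (φ j))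
    (v : EuclideanSpace ℝ (Fin k) → ℝ) (hv : ContDiff ℝ 2 v) :
    {p : EuclideanSpace ℝ (Fin k) × EuclideanSpace ℝ (Fin k) × ℝ |
      ∃ (x : EuclideanSpace ℝ (Fin k))
        (ξ : (Fin N → EuclideanSpace ℝ (Fin k)) × (Fin N → EuclideanSpace ℝ (Fin k))),
        fderiv ℝ (fun ξ' : (Fin N → EuclideanSpace ℝ (Fin k)) ×
            (Fin N → EuclideanSpace ℝ (Fin k)) => zrec Φ v x ξ'.1 ξ'.2 N) ξ = 0 ∧
        p = (x, gradient (fun x' => zrec Φ v x' ξ.1 ξ.2 N) x, zrec Φ v x ξ.1 ξ.2 N)} =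
    compAll (fun j => if h : j < N then φ ⟨j, h⟩ else id) N ''
      {p : EuclideanSpace ℝ (Fin k) × EuclideanSpace ℝ (Fin k) × ℝ |
        ∃ x₀ : EuclideanSpace ℝ (Fin k), p = (x₀, gradient v x₀, v x₀)} := by
  have hΦ j := (hΦC1 j).differentiable one_ne_zero
  have hv' := hv.differentiable two_ne_zero
  ext p
  constructor
  · rintro ⟨x, ⟨xv, yv⟩, hstat, rfl⟩
    have horbit := (fderiv_zrec_eq_zero_iff Φ v x xv yv hΦ hgen hv').1 hstat
    refine ⟨chainPoint Φ v x xv yv 0, ⟨Xc x xv 0, rfl⟩, ?_⟩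
    rw [compAll_apply_eq_of_forall_lt fun j hj => by simpa only [dif_pos hj] using horbit j hj,
      chainPoint_last]
  · rintro ⟨_, ⟨x₀, rfl⟩, rfl⟩
    set P := fun j => compAll (fun j => if h : j < N then φ ⟨j, h⟩ else id) j
      (x₀, gradient v x₀, v x₀)
    have hP : ∀ j (hj : j < N), φ ⟨j, hj⟩ (P j) = P (j + 1) := fun j hj => by
      simp only [P, compAll, Function.comp_apply, dif_pos hj]
    have hchain := chainPoint_of_orbit Φ v hgen rfl hP
    refine ⟨(P N).1, (fun m => (P m).1, fun m => (P (m + 1)).2.1), ?_, ?_⟩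
    · refine (fderiv_zrec_eq_zero_iff Φ v _ _ _ hΦ hgen hv').2 fun j hj => ?_
      rw [hchain j hj.le, hchain (j + 1) hj, hP j hj]
    · rw [← chainPoint_last, hchain N le_rfl]

/-- The family `S(x; ξ) = z_N` generates the image of the 1-jet of `v`
under the composition `φ_N ∘ ⋯ ∘ φ_1`:
`{(x, ∂_xS(x;ξ), S(x;ξ)) : ∂_ξS(x;ξ) = 0} = (φ_N ∘ ⋯ ∘ φ_1)(j¹v)`. -/
theorem generating_family_of_composition {k N : ℕ} (hN : 0 < N)
    (φ : Fin N → (EuclideanSpace ℝ (Fin k) × EuclideanSpace ℝ (Fin k) × ℝ →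
      EuclideanSpace ℝ (Fin k) × EuclideanSpace ℝ (Fin k) × ℝ))
    (hφbij : ∀ j, Function.Bijective (φ j))
    (Φ : Fin N → (EuclideanSpace ℝ (Fin k) → EuclideanSpace ℝ (Fin k) → ℝ → ℝ))
    (hΦC1 : ∀ j, ContDiff ℝ 1
      fun p : EuclideanSpace ℝ (Fin k) × EuclideanSpace ℝ (Fin k) × ℝ =>
        Φ j p.1 p.2.1 p.2.2)
    (hgen : ∀ j, IsGenFun (Φ j) (φ j))
    (v : EuclideanSpace ℝ (Fin k) → ℝ) (hv : ContDiff ℝ 2 v) :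
    {p : EuclideanSpace ℝ (Fin k) × EuclideanSpace ℝ (Fin k) × ℝ |
      ∃ (x : EuclideanSpace ℝ (Fin k))
        (ξ : (Fin N → EuclideanSpace ℝ (Fin k)) × (Fin N → EuclideanSpace ℝ (Fin k))),
        fderiv ℝ (fun ξ' : (Fin N → EuclideanSpace ℝ (Fin k)) ×
            (Fin N → EuclideanSpace ℝ (Fin k)) => zrec Φ v x ξ'.1 ξ'.2 N) ξ = 0 ∧
        p = (x, gradient (fun x' => zrec Φ v x' ξ.1 ξ.2 N) x, zrec Φ v x ξ.1 ξ.2 N)} =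
    compAll (fun j => if h : j < N then φ ⟨j, h⟩ else id) N ''
      {p : EuclideanSpace ℝ (Fin k) × EuclideanSpace ℝ (Fin k) × ℝ |
        ∃ x₀ : EuclideanSpace ℝ (Fin k), p = (x₀, gradient v x₀, v x₀)} :=
  generating_family_of_composition_general φ Φ hΦC1 hgen v hv
end

section
/- Let Q(ξ) = ½⟨Bξ, ξ⟩ be a nondegenerate quadratic form on ℝ^q (B symmetric invertible), let P be a set, and let W : P × ℝ^q → ℝ be such that there exist constants b, c with |W(p,0)| ≤ b and W(p,·) Lipschitz with constant c for every p ∈ P. Let θ : ℝ^q → [0,1] be C¹ with compact support, identically 1 on a neighborhood of 0, and ‖Dθ‖ ≤ 1 everywhere. Then there exist constants a > 1 and b' > 0 such that, setting S_K(p,ξ) := θ(ξ/a)·W(p,ξ) + Q(ξ) and S(p,ξ) := W(p,ξ) + Q(ξ): (i) S_K(p,ξ) = S(p,ξ) whenever ‖ξ‖ ≤ b'; (ii) 0 ∉ ∂_ξS_K(p,ξ) whenever ‖ξ‖ ≥ b', where ∂_ξS_K denotes the Clarke generalized gradient of ξ ↦ S_K(p,ξ); and (iii) S_K(p,ξ)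 = Q(ξ) for ξ outside a compact set independent of p. Consequently { (p, ξ) : 0 ∈ ∂_ξS_K(p,ξ) } = { (p, ξ) : 0 ∈ ∂_ξS(p,ξ), ‖ξ‖ ≤ b' } and S_K agrees with S on this set. -/
open RealInnerProductSpace Filter Topology

/-- The Clarke generalized directional derivative
`f°(p; v) = limsup_{q → p, t ↓ 0} (f(q + t v) − f(q)) / t`. -/
noncomputable def cDD {F : Type*} [NormedAddCommGroup F] [NormedSpace ℝ F]
    (f : F → ℝ) (p v : F) : ℝ :=
  Filter.limsup (fun qt : F × ℝ => (f (qt.1 + qt.2 • v) - f qt.1) / qt.2)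
    ((nhds p) ×ˢ (nhdsWithin 0 (Set.Ioi 0)))

/-- The Clarke generalized gradient `∂f(p) = {ζ : ⟨ζ, v⟩ ≤ f°(p; v) for all v}`. -/
noncomputable def clarkeGrad {F : Type*} [NormedAddCommGroup F] [InnerProductSpace ℝ F]
    (f : F → ℝ) (p : F) : Set F :=
  { ζ | ∀ v, ⟪ζ, v⟫ ≤ cDD f p v }

/-! Where `θ(·/a) ≡ 1` the two families have the same germ, and the Clarke gradient only sees
germs. Elsewhere `S_K = g + Q` with `g = θ(·/a) W`, which near `ξ` is Lipschitz with constant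
`(|W ξ| + c)/a + c ≤ |b| + 2c + c‖ξ‖/a`, while `Q` is strictly differentiable with gradient
`B ξ` of norm at least `m‖ξ‖` (`B` is injective). Taking `a ≥ 2c/m` and `b' ≈ 2(|b| + 2c)/m`,
the gradient wins for `‖ξ‖ ≥ b'`, so the Clarke derivative of `S_K` in the direction `-B ξ`
is negative; finally `a` is enlarged so that `θ(·/a) ≡ 1` on a neighbourhood of the ball of
radius `b'`. -/

open Metric NNReal Pointwise

theorem LipschitzOnWith.mul_of_abs_le {α : Type*} [PseudoMetricSpace α] {f g : α → ℝ}
    {s : Set α} {Kf Kg Mf Mg : ℝ≥0} (hf : LipschitzOnWith Kf f s) (hg : LipschitzOnWith Kg g s)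
    (hfM : ∀ x ∈ s, |f x| ≤ Mf) (hgM : ∀ x ∈ s, |g x| ≤ Mg) :
    LipschitzOnWith (Kf * Mg + Mf * Kg) (fun x => f x * g x) s := by
  refine LipschitzOnWith.of_dist_le_mul fun x hx y hy => ?_
  have hfd := hf.dist_le_mul x hx y hy
  have hgd := hg.dist_le_mul x hx y hy
  rw [Real.dist_eq] at hfd hgd ⊢
  calc |f x * g x - f y * g y| = |(f x - f y) * g x + f y * (g x - g y)| := by ring_nf
    _ ≤ |f x - f y| * |g x| + |f y| * |g x - g y| := by
      rw [← abs_mul, ← abs_mul]; exact abs_add_le _ _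
    _ ≤ Kf * dist x y * Mg + Mf * (Kg * dist x y) :=
      add_le_add (mul_le_mul hfd (hgM x hx) (abs_nonneg _) (by positivity))
        (mul_le_mul (hfM y hy) hgd (abs_nonneg _) Mf.coe_nonneg)
    _ = ↑(Kf * Mg + Mf * Kg) * dist x y := by push_cast; ring

theorem LipschitzWith.norm_le_add_mul_norm {E G : Type*} [SeminormedAddCommGroup E]
    [SeminormedAddCommGroup G] {f : E → G} {K : ℝ≥0} (hf : LipschitzWith K f) (x : E) :
    ‖f x‖ ≤ ‖f 0‖ + K * ‖x‖ := by
  have hd := hf.dist_le_mul x 0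
  rw [dist_eq_norm, dist_zero_right] at hd
  linarith [norm_le_norm_add_norm_sub' (f x) (f 0)]

theorem LipschitzWith.lipschitzOnWith_comp_smul_mul_ball {F : Type*} [NormedAddCommGroup F]
    [NormedSpace ℝ F] {θ W : F → ℝ} {c : ℝ≥0} (hθ : LipschitzWith 1 θ)
    (hθ1 : ∀ x, |θ x| ≤ 1) (hW : LipschitzWith c W) (a : ℝ) (ξ : F) :
    LipschitzOnWith (‖a‖₊ * (‖W ξ‖₊ + c) + c) (fun y => θ (a • y) * W y) (ball ξ 1) := by
  have hWball : ∀ y ∈ ball ξ 1, |W y| ≤ (‖W ξ‖₊ + c : ℝ≥0) := fun y hy => by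
    have hd := hW.dist_le_mul y ξ
    rw [Real.dist_eq] at hd
    push_cast
    rw [Real.norm_eq_abs]
    linarith [abs_sub_abs_le_abs_sub (W y) (W ξ),
      mul_le_mul_of_nonneg_left (mem_ball.mp hy).le c.coe_nonneg]
  simpa using (hθ.comp (lipschitzWith_smul a)).lipschitzOnWith.mul_of_abs_le
    hW.lipschitzOnWith (Mf := 1) (fun y _ => by simpa using hθ1 (a • y)) hWball

theorem image_inv_smul_eq_zero_of_notMem_smul_tsupport {F β : Type*} [TopologicalSpace F]
    [AddCommGroup F] [Module ℝ F] [Zero β] {θ : F → β} {a : ℝ} (ha : a ≠ 0) {ξ : F} (hξ : ξ ∉ a • tsupport θ) :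
    θ (a⁻¹ • ξ) = 0 :=
  image_eq_zero_of_notMem_tsupport fun h => hξ (by
    simpa [smul_inv_smul₀ ha] using Set.smul_mem_smul_set (a := a) h)

section Clarke

variable {F : Type*} [NormedAddCommGroup F] [NormedSpace ℝ F] {p : F}

theorem tendsto_add_smul_nhds_prod_nhdsGT (p v : F) :
    Tendsto (fun qt : F × ℝ => qt.1 + qt.2 • v) (𝓝 p ×ˢ 𝓝[>] 0) (𝓝 p) := by
  have hcont : Continuous fun qt : F × ℝ => qt.1 + qt.2 • v := by fun_prop
  simpa using (hcont.tendsto (p, 0)).mono_left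
    (nhds_prod_eq (x := p) (y := (0 : ℝ)) ▸ prod_mono le_rfl nhdsWithin_le_nhds)

theorem Filter.EventuallyEq.cDD_eq {f g : F → ℝ} (h : f =ᶠ[𝓝 p] g) (v : F) :
    cDD f p v = cDD g p v := by
  refine limsup_congr ?_
  filter_upwards [tendsto_fst.eventually h,
    (tendsto_add_smul_nhds_prod_nhdsGT p v).eventually h] with qt hq hqv
  rw [hq, hqv]

theorem LipschitzOnWith.eventually_abs_diffQuot_le {g : F → ℝ} {K : ℝ≥0} {s : Set F}
    (hs : s ∈ 𝓝 p) (hg : LipschitzOnWith K g s) (v : F) :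
    ∀ᶠ qt in 𝓝 p ×ˢ 𝓝[>] 0, |(g (qt.1 + qt.2 • v) - g qt.1) / qt.2| ≤ K * ‖v‖ := by
  filter_upwards [tendsto_fst.eventually_mem hs,
    (tendsto_add_smul_nhds_prod_nhdsGT p v).eventually_mem hs,
    eventually_mem_nhdsWithin.prod_inr _] with qt hq hqv (ht : 0 < qt.2)
  have hd := hg.dist_le_mul _ hqv _ hq
  rw [Real.dist_eq, dist_eq_norm, add_sub_cancel_left, norm_smul, Real.norm_of_nonneg ht.le]
    at hd
  rw [abs_div, abs_of_pos ht, div_le_iff₀ ht]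
  linarith

theorem HasStrictFDerivAt.tendsto_diffQuot {h : F → ℝ} {h' : F →L[ℝ] ℝ}
    (hh : HasStrictFDerivAt h h' p) (v : F) :
    Tendsto (fun qt : F × ℝ => (h (qt.1 + qt.2 • v) - h qt.1) / qt.2)
      (𝓝 p ×ˢ 𝓝[>] 0) (𝓝 (h' v)) := by
  have hpair : Tendsto (fun qt : F × ℝ => (qt.1 + qt.2 • v, qt.1)) (𝓝 p ×ˢ 𝓝[>] 0)
      (𝓝 (p, p)) :=
    (tendsto_add_smul_nhds_prod_nhdsGT p v).prodMk_nhds tendsto_fst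
  have hrem : (fun qt : F × ℝ => h (qt.1 + qt.2 • v) - h qt.1 - qt.2 * h' v)
      =o[𝓝 p ×ˢ 𝓝[>] 0] fun qt => qt.2 := by
    have hO : (fun qt : F × ℝ => qt.1 + qt.2 • v - qt.1) =O[𝓝 p ×ˢ 𝓝[>] 0] fun qt => qt.2 :=
      Asymptotics.IsBigO.of_bound ‖v‖ (Eventually.of_forall fun qt => by
        simp [norm_smul, mul_comm])
    refine ((hh.isLittleO.comp_tendsto hpair).trans_isBigO hO).congr_left fun qt => ?_
    simp only [Function.comp_apply, add_sub_cancel_left, map_smul, smul_eq_mul]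
  have hquot := (hrem.tendsto_div_nhds_zero).const_add (h' v)
  rw [add_zero] at hquot
  refine hquot.congr' ?_
  filter_upwards [eventually_mem_nhdsWithin.prod_inr _] with qt (ht : 0 < qt.2)
  field_simp
  ring

theorem cDD_add_le {g h : F → ℝ} {K : ℝ≥0} {s : Set F} {h' : F →L[ℝ] ℝ} (hs : s ∈ 𝓝 p)
    (hg : LipschitzOnWith K g s) (hh : HasStrictFDerivAt h h' p) (v : F) :
    cDD (fun x => g x + h x) p v ≤ K * ‖v‖ + h' v := by
  refine le_of_forall_pos_le_add fun ε hε => ?_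
  have hbounds : ∀ᶠ qt in 𝓝 p ×ˢ 𝓝[>] 0,
      (g (qt.1 + qt.2 • v) + h (qt.1 + qt.2 • v) - (g qt.1 + h qt.1)) / qt.2 ∈
        Set.Icc (-(K * ‖v‖) + h' v - ε) (K * ‖v‖ + h' v + ε) := by
    filter_upwards [hg.eventually_abs_diffQuot_le hs v,
      (hh.tendsto_diffQuot v).eventually (ball_mem_nhds _ hε)] with qt hgq hhq
    rw [Real.dist_eq, abs_lt] at hhq
    rw [abs_le] at hgq
    rw [add_sub_add_comm, add_div]
    constructor <;> linarith [hgq.1, hgq.2, hhq.1, hhq.2]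
  -- the lower bound is only there because `limsup` in `ℝ` is junk unless cobounded
  exact limsup_le_of_le (isCoboundedUnder_le_of_eventually_le _ (hbounds.mono fun _ hx => hx.1))
    (hbounds.mono fun _ hx => hx.2)

end Clarke

section ClarkeGrad

variable {F : Type*} [NormedAddCommGroup F] [InnerProductSpace ℝ F] {p : F}

theorem Filter.EventuallyEq.clarkeGrad_eq {f g : F → ℝ} (h : f =ᶠ[𝓝 p] g) :
    clarkeGrad f p = clarkeGrad g p := by
  ext ζ
  simp only [clarkeGrad, Set.mem_ofPred_eq, h.cDD_eq]

theorem zero_notMem_clarkeGrad_add {g h : F → ℝ} {K : ℝ≥0} {s : Set F} {w : F}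
    (hs : s ∈ 𝓝 p) (hg : LipschitzOnWith K g s) (hh : HasStrictFDerivAt h (innerSL ℝ w) p)
    (hK : K < ‖w‖) : (0 : F) ∉ clarkeGrad (fun x => g x + h x) p := by
  intro h0
  have hle := (h0 (-w)).trans (cDD_add_le hs hg hh (-w))
  rw [inner_zero_left, innerSL_apply_apply, inner_neg_right, real_inner_self_eq_norm_sq,
    norm_neg] at hle
  nlinarith [K.coe_nonneg]

theorem LinearMap.IsSymmetric.hasStrictFDerivAt_half_inner_self {B : F →L[ℝ] F}
    (hB : (B : F →ₗ[ℝ] F).IsSymmetric) (x : F) :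
    HasStrictFDerivAt (fun ξ => 1 / 2 * ⟪B ξ, ξ⟫) (innerSL ℝ (B x)) x := by
  have hQ : (fun ξ => 1 / 2 * ⟪B ξ, ξ⟫) = fun ξ => 1 / 2 * B.reApplyInnerSelf ξ := by
    simp [ContinuousLinearMap.reApplyInnerSelf]
  rw [hQ]
  refine ((hB.hasStrictFDerivAt_reApplyInnerSelf x).const_mul (1 / 2)).congr_fderiv ?_
  ext y
  simp

theorem zero_notMem_clarkeGrad_comp_smul_mul_add_half_inner {B : F →L[ℝ] F}
    (hB : (B : F →ₗ[ℝ] F).IsSymmetric) {θ W : F → ℝ} {c : ℝ≥0} (hθ : LipschitzWith 1 θ)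
    (hθ1 : ∀ x, |θ x| ≤ 1) (hW : LipschitzWith c W) {a : ℝ} {ξ : F}
    (hdom : |a| * (|W ξ| + c) + c < ‖B ξ‖) :
    (0 : F) ∉ clarkeGrad (fun x => θ (a • x) * W x + 1 / 2 * ⟪B x, x⟫) ξ :=
  zero_notMem_clarkeGrad_add (ball_mem_nhds ξ one_pos)
    (hθ.lipschitzOnWith_comp_smul_mul_ball hθ1 hW a ξ) (hB.hasStrictFDerivAt_half_inner_self ξ)
    (by simpa using hdom)

end ClarkeGrad

theorem exists_truncation_constants (b : ℝ) {c m ε : ℝ} (hc : 0 ≤ c) (hm : 0 < m)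
    (hε : 0 < ε) : ∃ a > (1 : ℝ), ∃ b' > (0 : ℝ), b' < a * ε ∧
      ∀ r w, b' ≤ r → w ≤ b + c * r → a⁻¹ * (w + c) + c < m * r := by
  set b' := 2 * (|b| + 2 * c + 1) / m with hb'
  set a := 2 * c / m + b' / ε + 2
  have hb'pos : 0 < b' := by positivity
  have hca : 2 * c ≤ m * a := by
    have : 2 * c / m * m = 2 * c := div_mul_cancel₀ _ hm.ne'
    nlinarith [show 0 ≤ b' / ε by positivity]
  have hb'a : b' < a * ε := by
    have : b' / ε * ε = b' := div_mul_cancel₀ _ hε.ne'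
    nlinarith [show 0 ≤ 2 * c / m by positivity]
  have ha1 : 1 < a := by linarith [show 0 ≤ 2 * c / m + b' / ε by positivity]
  refine ⟨a, ha1, b', hb'pos, hb'a, fun r w hr hw => ?_⟩
  have hapos : 0 < a := by linarith
  have hmr : 2 * (|b| + 2 * c + 1) ≤ m * r := by
    rw [hb', div_le_iff₀ hm] at hr
    linarith
  rw [← div_eq_inv_mul, div_add' _ _ _ hapos.ne', div_lt_iff₀ hapos]
  nlinarith [le_abs_self b, abs_nonneg b, mul_le_mul_of_nonneg_right hca (hb'pos.le.trans hr),
    mul_le_mul_of_nonneg_right hmr hapos.le, mul_le_mul_of_nonneg_left ha1.le hc,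
    mul_le_mul_of_nonneg_left ha1.le (abs_nonneg b)]

/-- Truncating the family `S(p,ξ) = W(p,ξ) + Q(ξ)` by a cutoff `θ` yields,
for suitable `a > 1` and `b' > 0`, a family `S_K(p,ξ) = θ(ξ/a) W(p,ξ) + Q(ξ)` that agrees
with `S` on `{‖ξ‖ ≤ b'}`, has no Clarke-critical points (in `ξ`) with `‖ξ‖ ≥ b'`, equals `Q`
outside a compact set independent of `p`, and has the same critical set as `S` below level
`b'`, where `S_K` agrees with `S`. -/
theorem truncated_generating_family {q : ℕ} {P : Type*}
    (B : EuclideanSpace ℝ (Fin q) →L[ℝ] EuclideanSpace ℝ (Fin q))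
    (hBsymm : ∀ u v : EuclideanSpace ℝ (Fin q), ⟪B u, v⟫ = ⟪u, B v⟫)
    (hBbij : Function.Bijective B)
    (W : P → EuclideanSpace ℝ (Fin q) → ℝ) (b : ℝ) (c : NNReal)
    (hWb : ∀ p, |W p 0| ≤ b)
    (hWc : ∀ p, LipschitzWith c (W p))
    (θ : EuclideanSpace ℝ (Fin q) → ℝ)
    (hθC1 : ContDiff ℝ 1 θ) (hθsupp : HasCompactSupport θ)
    (hθrange : ∀ ξ, θ ξ ∈ Set.Icc (0 : ℝ) 1)
    (hθone : ∀ᶠ ξ in nhds (0 : EuclideanSpace ℝ (Fin q)), θ ξ = 1)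
    (hθD : ∀ ξ, ‖fderiv ℝ θ ξ‖ ≤ 1) :
    ∃ a > (1 : ℝ), ∃ b' > (0 : ℝ),
      (∀ p ξ, ‖ξ‖ ≤ b' →
        θ (a⁻¹ • ξ) * W p ξ + (1 / 2) * ⟪B ξ, ξ⟫ = W p ξ + (1 / 2) * ⟪B ξ, ξ⟫) ∧
      (∀ p ξ, b' ≤ ‖ξ‖ →
        (0 : EuclideanSpace ℝ (Fin q)) ∉
          clarkeGrad (fun ξ' => θ (a⁻¹ • ξ') * W p ξ' + (1 / 2) * ⟪B ξ', ξ'⟫) ξ) ∧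
      (∃ C : Set (EuclideanSpace ℝ (Fin q)), IsCompact C ∧
        ∀ p, ∀ ξ ∉ C, θ (a⁻¹ • ξ) * W p ξ + (1 / 2) * ⟪B ξ, ξ⟫ = (1 / 2) * ⟪B ξ, ξ⟫) ∧
      ({pξ : P × EuclideanSpace ℝ (Fin q) |
          (0 : EuclideanSpace ℝ (Fin q)) ∈
            clarkeGrad (fun ξ' => θ (a⁻¹ • ξ') * W pξ.1 ξ' + (1 / 2) * ⟪B ξ', ξ'⟫) pξ.2} =
        {pξ : P × EuclideanSpace ℝ (Fin q) |
          (0 : EuclideanSpace ℝ (Fin q)) ∈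
            clarkeGrad (fun ξ' => W pξ.1 ξ' + (1 / 2) * ⟪B ξ', ξ'⟫) pξ.2 ∧ ‖pξ.2‖ ≤ b'}) ∧
      ∀ p ξ, (0 : EuclideanSpace ℝ (Fin q)) ∈
          clarkeGrad (fun ξ' => θ (a⁻¹ • ξ') * W p ξ' + (1 / 2) * ⟪B ξ', ξ'⟫) ξ →
        θ (a⁻¹ • ξ) * W p ξ + (1 / 2) * ⟪B ξ, ξ⟫ = W p ξ + (1 / 2) * ⟪B ξ, ξ⟫ := by
  obtain ⟨ε, hε, hθε⟩ := Metric.eventually_nhds_iff.mp hθone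
  obtain ⟨K, -, hK⟩ := B.toLinearMap.injective_iff_antilipschitz.mp hBbij.1
  obtain ⟨m, hm, hBm⟩ := antilipschitzWith_iff_exists_mul_le_norm.mp ⟨K, hK⟩
  obtain ⟨a, ha1, b', hb'pos, hb'a, hdom⟩ := exists_truncation_constants b c.coe_nonneg hm hε
  have hθa : ∀ ξ, ‖ξ‖ < a * ε → θ (a⁻¹ • ξ) = 1 := fun ξ hξ => hθε (by
    rwa [dist_zero_right, norm_smul, Real.norm_of_nonneg (by positivity),
      inv_mul_lt_iff₀ (by positivity)])
  have hgerm : ∀ p ξ, ‖ξ‖ ≤ b' →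
      (fun ξ' => θ (a⁻¹ • ξ') * W p ξ' + 1 / 2 * ⟪B ξ', ξ'⟫) =ᶠ[𝓝 ξ]
        fun ξ' => W p ξ' + 1 / 2 * ⟪B ξ', ξ'⟫ := fun p ξ hξ => by
    filter_upwards [(isOpen_lt continuous_norm continuous_const).mem_nhds (hξ.trans_lt hb'a)]
      with ξ' hξ'
    rw [hθa ξ' hξ', one_mul]
  have hθlip : LipschitzWith 1 θ :=
    lipschitzWith_of_nnnorm_fderiv_le (hθC1.differentiable one_ne_zero) fun ξ => by
      exact_mod_cast hθD ξ
  have hθ1 : ∀ x, |θ x| ≤ 1 := fun x =>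
    abs_le.mpr ⟨by linarith [(hθrange x).1], (hθrange x).2⟩
  have hcrit : ∀ p ξ, b' ≤ ‖ξ‖ → (0 : EuclideanSpace ℝ (Fin q)) ∉
      clarkeGrad (fun ξ' => θ (a⁻¹ • ξ') * W p ξ' + 1 / 2 * ⟪B ξ', ξ'⟫) ξ := fun p ξ hξ =>
    zero_notMem_clarkeGrad_comp_smul_mul_add_half_inner hBsymm hθlip hθ1 (hWc p) <| by
      rw [abs_inv, abs_of_pos (by positivity), ← Real.norm_eq_abs]
      refine (hdom _ _ hξ (((hWc p).norm_le_add_mul_norm ξ).trans ?_)).trans_le (hBm ξ)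
      linarith [hWb p, Real.norm_eq_abs (W p 0)]
  have hsmall : ∀ p ξ, (0 : EuclideanSpace ℝ (Fin q)) ∈
      clarkeGrad (fun ξ' => θ (a⁻¹ • ξ') * W p ξ' + 1 / 2 * ⟪B ξ', ξ'⟫) ξ → ‖ξ‖ ≤ b' :=
    fun p ξ h => (not_le.mp fun hξ => hcrit p ξ hξ h).le
  refine ⟨a, ha1, b', hb'pos, fun p ξ hξ => by rw [hθa ξ (hξ.trans_lt hb'a), one_mul], hcrit,
    ⟨a • tsupport θ, hθsupp.isCompact.smul a, fun p ξ hξ => ?_⟩, ?_,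
    fun p ξ h => by rw [hθa ξ ((hsmall p ξ h).trans_lt hb'a), one_mul]⟩
  · rw [image_inv_smul_eq_zero_of_notMem_smul_tsupport (by positivity) hξ, zero_mul, zero_add]
  · ext ⟨p, ξ⟩
    simp only [Set.mem_ofPred_eq]
    refine ⟨fun h => ?_, fun ⟨h, hξ⟩ => (hgerm p ξ hξ).clarkeGrad_eq ▸ h⟩
    exact ⟨(hgerm p ξ (hsmall p ξ h)).clarkeGrad_eq ▸ h, hsmall p ξ h⟩
end

section
/- Let h : ℝ → ℝ be C¹ and let φ^t : ℝ³ → ℝ³ be the flow φ^t(x_0, y_0, z_0) = ( x_0 + ∫_0^t h'(y_0 e^{−s}) ds, y_0 e^{−t}, −h(y_0 e^{−t}) + e^{−t}(h(y_0) + z_0) ) of the characteristic equations for H(x,y,z) = z + h(y). Then for every t > 0 the function Φ^t(x_0, Y, z_0) = ∫_0^t e^{−s} h(e^{s} Y) ds + z_0 (1 − e^{−t}) is a generating function for φ^t: 1 − ∂_{z_0}Φ^t = e^{−t} ≠ 0, and for all (x,y,z), (X,Y,Z) ∈ ℝ³ the system X − x = ∂_YΦ^t(x,Y,z), Y − y =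 −∂_xΦ^t(x,Y,z) − y·∂_zΦ^t(x,Y,z), Z − z = (X − x)·Y − Φ^t(x,Y,z) holds if and only if φ^t(x,y,z) = (X,Y,Z). -/
/-!
Since `Φ^t` does not depend on `x` and is affine in `z`, the second equation of the system says
`Y = y e^{-t}`. Differentiating under the integral sign, the first one reads
`X - x = ∫₀ᵗ h'(e^s Y) ds`, which the substitution `s ↦ t - s` turns into the first component of
`φ^t`. The third one follows from the integration by parts
`∫₀ᵗ e^{-s} h(e^s Y) ds = h(Y) - e^{-t} h(e^t Y) + Y ∫₀ᵗ h'(e^s Y) ds`.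
-/

open Filter Topology

/-- The explicit characteristic flow of `H(x,y,z) = z + h(y)`. -/
noncomputable def charFlow (h : ℝ → ℝ) (t : ℝ) (p : ℝ × ℝ × ℝ) : ℝ × ℝ × ℝ :=
  (p.1 + ∫ s in (0:ℝ)..t, deriv h (p.2.1 * Real.exp (-s)),
   p.2.1 * Real.exp (-t),
   -h (p.2.1 * Real.exp (-t)) + Real.exp (-t) * (h p.2.1 + p.2.2))

/-- The candidate generating function `Φ^t(x₀, Y, z₀) = ∫₀ᵗ e^{−s} h(e^{s} Y) ds + z₀(1 − e^{−t})`. -/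
noncomputable def genFun (h : ℝ → ℝ) (t : ℝ) (x Y z : ℝ) : ℝ :=
  (∫ s in (0:ℝ)..t, Real.exp (-s) * h (Real.exp s * Y)) + z * (1 - Real.exp (-t))

open Real intervalIntegral

theorem hasDerivAt_intervalIntegral_of_continuous_uncurry {E : Type*} [NormedAddCommGroup E]
    [NormedSpace ℝ E] {f f' : ℝ → ℝ → E} (hf : Continuous (Function.uncurry f))
    (hf' : Continuous (Function.uncurry f')) (hderiv : ∀ x s, HasDerivAt (f · s) (f' x s) x)
    (a b x₀ : ℝ) : HasDerivAt (fun x => ∫ s in a..b, f x s) (∫ s in a..b, f' x₀ s) x₀ := by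
  obtain ⟨C, hC⟩ := ((isCompact_closedBall x₀ 1).prod (isCompact_uIcc (a := a) (b := b))
    ).exists_bound_of_continuousOn hf'.continuousOn
  refine (hasDerivAt_integral_of_dominated_loc_of_deriv_le (bound := fun _ => C)
    (Metric.ball_mem_nhds x₀ one_pos) ?_ ?_ ?_ ?_ intervalIntegrable_const ?_).2
  · exact .of_forall fun x => (hf.comp (.prodMk_right x)).aestronglyMeasurable
  · exact (hf.comp (.prodMk_right x₀)).intervalIntegrable a b
  · exact (hf'.comp (.prodMk_right x₀)).aestronglyMeasurable
  · exact .of_forall fun s hs x hx =>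
      hC (x, s) ⟨Metric.ball_subset_closedBall hx, Set.uIoc_subset_uIcc hs⟩
  · exact .of_forall fun s _ x _ => hderiv x s

section

variable {h : ℝ → ℝ}

theorem hasDerivAt_exp_neg_mul_comp_exp_mul (hh : Differentiable ℝ h) (s Y : ℝ) :
    HasDerivAt (fun Y' => exp (-s) * h (exp s * Y')) (deriv h (exp s * Y)) Y := by
  have := ((hh _).hasDerivAt.comp Y ((hasDerivAt_id Y).const_mul (exp s))).const_mul (exp (-s))
  refine this.congr_deriv ?_
  have he : exp (-s) * exp s = 1 := by rw [← exp_add, neg_add_cancel, exp_zero]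
  simp only [id, mul_one]
  linear_combination deriv h (exp s * Y) * he

theorem integral_exp_neg_mul_comp_exp_mul (hh : ContDiff ℝ 1 h) (t Y : ℝ) :
    ∫ s in (0:ℝ)..t, exp (-s) * h (exp s * Y) =
      h Y - exp (-t) * h (exp t * Y) + Y * ∫ s in (0:ℝ)..t, deriv h (exp s * Y) := by
  have hderiv : ∀ s, HasDerivAt (fun s => -(exp (-s) * h (exp s * Y)))
      (exp (-s) * h (exp s * Y) - Y * deriv h (exp s * Y)) s := by
    intro s
    have := (((hasDerivAt_neg s).exp).mul
      (((hh.differentiable one_ne_zero) _).hasDerivAt.comp s ((hasDerivAt_exp s).mul_const Y))).neg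
    refine this.congr_deriv ?_
    have he : exp (-s) * exp s = 1 := by rw [← exp_add, neg_add_cancel, exp_zero]
    simp only [Function.comp_apply]
    linear_combination (-Y * deriv h (exp s * Y)) * he
  have hcont : Continuous fun s => exp (-s) * h (exp s * Y) := by
    have := hh.continuous; fun_prop
  have hcont' : Continuous fun s => Y * deriv h (exp s * Y) := by
    have := hh.continuous_deriv le_rfl; fun_prop
  have hftc := integral_eq_sub_of_hasDerivAt (fun s _ => hderiv s)
    ((hcont.sub hcont').intervalIntegrable 0 t)
  rw [integral_sub (hcont.intervalIntegrable 0 t) (hcont'.intervalIntegrable 0 t),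
    integral_const_mul] at hftc
  simp only [neg_zero, exp_zero, one_mul] at hftc
  linarith

theorem integral_comp_exp_mul_mul_exp_neg (g : ℝ → ℝ) (t y : ℝ) :
    ∫ s in (0:ℝ)..t, g (exp s * (y * exp (-t))) = ∫ s in (0:ℝ)..t, g (y * exp (-s)) := by
  have := integral_comp_sub_left (fun s => g (y * exp (-s))) (a := 0) (b := t) t
  rw [sub_self, sub_zero] at this
  rw [← this]
  congr 1 with s
  rw [neg_sub, sub_eq_add_neg, exp_add]
  ring_nf

theorem deriv_genFun_x (t x Y z : ℝ) : deriv (fun x' => genFun h t x' Y z) x = 0 :=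
  deriv_const x _

theorem deriv_genFun_Y (hh : ContDiff ℝ 1 h) (t x Y z : ℝ) :
    deriv (fun Y' => genFun h t x Y' z) Y = ∫ s in (0:ℝ)..t, deriv h (exp s * Y) := by
  have hdiff := hh.differentiable one_ne_zero
  refine ((hasDerivAt_intervalIntegral_of_continuous_uncurry ?_ ?_
    (fun Y s => hasDerivAt_exp_neg_mul_comp_exp_mul hdiff s Y) 0 t Y).add_const _).deriv
  · have := hh.continuous; fun_prop
  · have := hh.continuous_deriv le_rfl; fun_prop

theorem deriv_genFun_z (t x Y z : ℝ) :
    deriv (fun z' => genFun h t x Y z') z = 1 - exp (-t) := by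
  simp [genFun]

end

/-- For every `t > 0`, `Φ^t` is a generating function for the flow `φ^t` of
the characteristic equations of `H(x,y,z) = z + h(y)`:
`1 − ∂_{z₀}Φ^t = e^{−t} ≠ 0`, and the generating-function system holds iff
`φ^t(x,y,z) = (X,Y,Z)`. -/
theorem genFun_is_generating_function (h : ℝ → ℝ) (hh : ContDiff ℝ 1 h) :
    ∀ t : ℝ, 0 < t →
      (∀ x Y z : ℝ, 1 - deriv (fun z' => genFun h t x Y z') z = Real.exp (-t)) ∧
      Real.exp (-t) ≠ 0 ∧
      ∀ x y z X Y Z : ℝ,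
        (X - x = deriv (fun Y' => genFun h t x Y' z) Y ∧
          Y - y = -deriv (fun x' => genFun h t x' Y z) x -
            deriv (fun z' => genFun h t x Y z') z * y ∧
          Z - z = (X - x) * Y - genFun h t x Y z)
        ↔ charFlow h t (x, y, z) = (X, Y, Z) := by
  intro t _
  refine ⟨fun x Y z => by rw [deriv_genFun_z]; ring, exp_ne_zero _, fun x y z X Y Z => ?_⟩
  have hy : exp t * (y * exp (-t)) = y := by
    rw [mul_left_comm, ← exp_add, add_neg_cancel, exp_zero, mul_one]
  rw [deriv_genFun_x, deriv_genFun_Y hh, deriv_genFun_z, genFun,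
    integral_exp_neg_mul_comp_exp_mul hh, charFlow, Prod.mk.injEq, Prod.mk.injEq]
  constructor
  · rintro ⟨hX, hY, hZ⟩
    obtain rfl : Y = y * exp (-t) := by linear_combination hY
    rw [integral_comp_exp_mul_mul_exp_neg] at hX hZ
    rw [hy] at hZ
    exact ⟨by linarith, rfl, by linear_combination -hZ - y * exp (-t) * hX⟩
  · rintro ⟨hX, rfl, hZ⟩
    rw [hy, integral_comp_exp_mul_mul_exp_neg]
    have hX' : X - x = ∫ s in (0:ℝ)..t, deriv h (y * exp (-s)) := by linarith
    exact ⟨hX', by ring, by linear_combination -hZ - y * exp (-t) * hX'⟩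
end

section
/- (Mean value theorem for Clarke gradients.) Let x, y ∈ ℝ^m and let f : ℝ^m → ℝ be Lipschitz on a neighborhood of the segment [x,y] = { λx + (1−λ)y : λ ∈ [0,1] }. Then there exists a point z in the open segment between x and y such that f(y) − f(x) ∈ { ⟨ζ, y − x⟩ : ζ ∈ ∂f(z) }. -/
open RealInnerProductSpace Filter Topology

/-!
On the line through `x` and `y`, the function `g t = f (x + t • (y - x)) + t * (f x - f y)` takes
the same value at `0` and `1`, so it has a local extremum at some `t₀ ∈ (0, 1)`. Put
`z = x + t₀ • (y - x)`. At a minimum the difference quotients of `f` based at `z`, at a maximum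
those based at `z - r • v` (which still tends to `z`), bound `f°(z; v)` below for `v = ±(y - x)`:
`f y - f x ≤ f°(z; y - x)` and `f x - f y ≤ f°(z; x - y)`. Since `f°(z; ·)` is sublinear,
Hahn–Banach extends `s • (y - x) ↦ s * (f y - f x)` to a linear functional dominated by it; the
Lipschitz bound `f°(z; v) ≤ K * ‖v‖` makes that functional continuous, and its Riesz
representative is the required `ζ ∈ ∂f(z)`.
-/

open scoped NNReal

theorem exists_linearMap_le_sublinear_apply_eq {E : Type*} [AddCommGroup E] [Module ℝ E]
    {N : E → ℝ} (N_hom : ∀ c : ℝ, 0 < c → ∀ x, N (c • x) = c * N x)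
    (N_add : ∀ x y, N (x + y) ≤ N x + N y) {w : E} {r : ℝ} (h₁ : r ≤ N w) (h₂ : -r ≤ N (-w)) :
    ∃ g : E →ₗ[ℝ] ℝ, (∀ x, g x ≤ N x) ∧ g w = r := by
  have N_zero : N 0 = 0 := by
    have h := N_hom 2 two_pos 0
    rw [smul_zero] at h
    linarith
  have hr : ∀ c : ℝ, c • w = 0 → c • r = 0 := by
    intro c hc
    rcases smul_eq_zero.1 hc with rfl | rfl
    · exact zero_smul ℝ r
    · rw [neg_zero, N_zero] at h₂
      rw [N_zero] at h₁
      rw [le_antisymm h₁ (by linarith), smul_zero]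
  set g₀ := LinearPMap.mkSpanSingleton' (σ := RingHom.id ℝ) w r hr
  have hg₀ : ∀ x : g₀.domain, g₀ x ≤ N x := by
    rintro ⟨x, hx⟩
    obtain ⟨a, rfl⟩ := Submodule.mem_span_singleton.1 hx
    rw [LinearPMap.mkSpanSingleton'_apply, RingHom.id_apply, smul_eq_mul]
    change a * r ≤ N (a • w)
    rcases lt_trichotomy a 0 with ha | rfl | ha
    · rw [← neg_neg a, neg_smul, ← smul_neg, N_hom _ (neg_pos.2 ha)]
      linarith [mul_le_mul_of_nonneg_left h₂ (neg_pos.2 ha).le]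
    · rw [zero_smul, N_zero, zero_mul]
    · rw [N_hom a ha]
      exact mul_le_mul_of_nonneg_left h₁ ha.le
  obtain ⟨g, hgg₀, hgN⟩ := exists_extension_of_le_sublinear g₀ N N_hom N_add hg₀
  exact ⟨g, hgN, (hgg₀ ⟨w, Submodule.mem_span_singleton_self w⟩).trans
    (LinearPMap.mkSpanSingleton'_apply_self w r hr _)⟩

section ClarkeFilter

variable {X : Type*} [TopologicalSpace X]

def clarkeFilter (p : X) : Filter (X × ℝ) :=
  𝓝 p ×ˢ 𝓝[>] 0

instance (p : X) : (clarkeFilter p).NeBot := by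
  unfold clarkeFilter; infer_instance

theorem eventually_clarkeFilter_snd_pos (p : X) : ∀ᶠ qt in clarkeFilter p, 0 < qt.2 :=
  tendsto_snd.eventually self_mem_nhdsWithin

theorem tendsto_scale_clarkeFilter (p : X) {c : ℝ} (hc : 0 < c) :
    Tendsto (fun qt : X × ℝ => (qt.1, c * qt.2)) (clarkeFilter p) (clarkeFilter p) :=
  tendsto_fst.prodMk ((tendsto_iff_comap.2 (comap_mulLeft_nhdsGT_zero hc).ge).comp tendsto_snd)

end ClarkeFilter

section NormedSpace

variable {F : Type*} [NormedAddCommGroup F] [NormedSpace ℝ F]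

noncomputable def diffQuot (f : F → ℝ) (v : F) (qt : F × ℝ) : ℝ :=
  (f (qt.1 + qt.2 • v) - f qt.1) / qt.2

theorem cDD_eq_limsup (f : F → ℝ) (p v : F) :
    cDD f p v = limsup (diffQuot f v) (clarkeFilter p) :=
  rfl

theorem tendsto_add_smul_clarkeFilter (p v : F) :
    Tendsto (fun qt : F × ℝ => qt.1 + qt.2 • v) (clarkeFilter p) (𝓝 p) := by
  unfold clarkeFilter
  simpa using (tendsto_fst (g := 𝓝[>] (0 : ℝ))).add
    ((tendsto_nhdsWithin_iff.1 (tendsto_snd (f := 𝓝 p))).1.smul_const v)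

theorem tendsto_shift_clarkeFilter (p v : F) :
    Tendsto (fun qt : F × ℝ => (qt.1 + qt.2 • v, qt.2)) (clarkeFilter p) (clarkeFilter p) :=
  (tendsto_add_smul_clarkeFilter p v).prodMk tendsto_snd

theorem diffQuot_add (f : F → ℝ) (v w : F) (qt : F × ℝ) :
    diffQuot f (v + w) qt = diffQuot f v qt + diffQuot f w (qt.1 + qt.2 • v, qt.2) := by
  simp only [diffQuot, smul_add, ← add_assoc]
  ring

theorem diffQuot_smul (f : F → ℝ) {c : ℝ} (hc : c ≠ 0) (v : F) (qt : F × ℝ) :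
    diffQuot f (c • v) qt = c * diffQuot f v (qt.1, c * qt.2) := by
  simp only [diffQuot, smul_smul, mul_comm qt.2 c]
  by_cases ht : qt.2 = 0
  · simp [ht]
  · field_simp

variable {f : F → ℝ} {K : ℝ≥0} {U : Set F} {p : F}

theorem eventually_abs_diffQuot_le (hf : LipschitzOnWith K f U) (hU : U ∈ 𝓝 p) (v : F) :
    ∀ᶠ qt in clarkeFilter p, |diffQuot f v qt| ≤ K * ‖v‖ := by
  filter_upwards [tendsto_fst.eventually hU, (tendsto_add_smul_clarkeFilter p v).eventually hU,
    eventually_clarkeFilter_snd_pos p] with ⟨q, t⟩ hq hqv ht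
  have hlip := hf.dist_le_mul _ hqv _ hq
  rw [Real.dist_eq, dist_self_add_left, norm_smul, Real.norm_of_nonneg ht.le] at hlip
  rw [diffQuot, abs_div, abs_of_pos ht, div_le_iff₀ ht]
  linarith

theorem isBoundedUnder_le_diffQuot (hf : LipschitzOnWith K f U) (hU : U ∈ 𝓝 p) {ι : Type*}
    {l : Filter ι} {φ : ι → F × ℝ} (hφ : Tendsto φ l (clarkeFilter p)) (v : F) :
    IsBoundedUnder (· ≤ ·) l (fun i => diffQuot f v (φ i)) :=
  isBoundedUnder_of_eventually_le <|
    (hφ.eventually (eventually_abs_diffQuot_le hf hU v)).mono fun _ h => (abs_le.1 h).2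

theorem isBoundedUnder_ge_diffQuot (hf : LipschitzOnWith K f U) (hU : U ∈ 𝓝 p) {ι : Type*}
    {l : Filter ι} {φ : ι → F × ℝ} (hφ : Tendsto φ l (clarkeFilter p)) (v : F) :
    IsBoundedUnder (· ≥ ·) l (fun i => diffQuot f v (φ i)) :=
  isBoundedUnder_of_eventually_ge <|
    (hφ.eventually (eventually_abs_diffQuot_le hf hU v)).mono fun _ h => (abs_le.1 h).1

theorem cDD_le_mul_norm (hf : LipschitzOnWith K f U) (hU : U ∈ 𝓝 p) (v : F) : cDD f p v ≤ K * ‖v‖ :=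
  limsup_le_of_le (isBoundedUnder_ge_diffQuot hf hU tendsto_id v).isCoboundedUnder_le <|
    (eventually_abs_diffQuot_le hf hU v).mono fun _ h => (abs_le.1 h).2

theorem cDD_add_le_s16 (hf : LipschitzOnWith K f U) (hU : U ∈ 𝓝 p) (v w : F) :
    cDD f p (v + w) ≤ cDD f p v + cDD f p w := by
  have hφ := tendsto_shift_clarkeFilter p v
  calc cDD f p (v + w)
      = limsup (fun qt => diffQuot f v qt + diffQuot f w (qt.1 + qt.2 • v, qt.2))
          (clarkeFilter p) := by
        rw [cDD_eq_limsup, funext (diffQuot_add f v w)]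
    _ ≤ cDD f p v + limsup (fun qt => diffQuot f w (qt.1 + qt.2 • v, qt.2)) (clarkeFilter p) :=
        limsup_add_le (u := diffQuot f v) (isBoundedUnder_ge_diffQuot hf hU tendsto_id v)
          (isBoundedUnder_le_diffQuot hf hU tendsto_id v)
          (isBoundedUnder_ge_diffQuot hf hU hφ w).isCoboundedUnder_le
          (isBoundedUnder_le_diffQuot hf hU hφ w)
    _ ≤ cDD f p v + cDD f p w :=
        add_le_add_right (hφ.limsup_comp_le_limsup (u := diffQuot f w)
          (isBoundedUnder_ge_diffQuot hf hU hφ w).isCoboundedUnder_le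
          (isBoundedUnder_le_diffQuot hf hU tendsto_id w)) _

theorem cDD_smul_le (hf : LipschitzOnWith K f U) (hU : U ∈ 𝓝 p) {c : ℝ} (hc : 0 < c) (v : F) :
    cDD f p (c • v) ≤ c * cDD f p v := by
  have hψ := tendsto_scale_clarkeFilter p hc
  calc cDD f p (c • v)
      = limsup (fun qt => c * diffQuot f v (qt.1, c * qt.2)) (clarkeFilter p) := by
        rw [cDD_eq_limsup, funext (diffQuot_smul f hc.ne' v)]
    _ = c * limsup (fun qt => diffQuot f v (qt.1, c * qt.2)) (clarkeFilter p) :=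
        ((monotone_mul_left_of_nonneg hc.le).map_limsup_of_continuousAt _
          (continuous_const_mul c).continuousAt (isBoundedUnder_le_diffQuot hf hU hψ v)
          (isBoundedUnder_ge_diffQuot hf hU hψ v).isCoboundedUnder_le).symm
    _ ≤ c * cDD f p v :=
        mul_le_mul_of_nonneg_left (hψ.limsup_comp_le_limsup (u := diffQuot f v)
          (isBoundedUnder_ge_diffQuot hf hU hψ v).isCoboundedUnder_le
          (isBoundedUnder_le_diffQuot hf hU tendsto_id v)) hc.le

theorem cDD_smul (hf : LipschitzOnWith K f U) (hU : U ∈ 𝓝 p) {c : ℝ} (hc : 0 < c) (v : F) :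
    cDD f p (c • v) = c * cDD f p v := by
  refine le_antisymm (cDD_smul_le hf hU hc v) ?_
  have h := cDD_smul_le hf hU (inv_pos.2 hc) (c • v)
  rw [inv_smul_smul₀ hc.ne'] at h
  calc c * cDD f p v ≤ c * (c⁻¹ * cDD f p (c • v)) := mul_le_mul_of_nonneg_left h hc.le
    _ = cDD f p (c • v) := by field_simp

theorem le_cDD_of_frequently (hf : LipschitzOnWith K f U) (hU : U ∈ 𝓝 p) {v : F} {a : ℝ}
    (h : ∃ᶠ qt in clarkeFilter p, a ≤ diffQuot f v qt) : a ≤ cDD f p v :=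
  le_limsup_of_frequently_le h (isBoundedUnder_le_diffQuot hf hU tendsto_id v)

theorem le_cDD_of_eventually_le_forward_diff (hf : LipschitzOnWith K f U) (hU : U ∈ 𝓝 p)
    {v : F} {a : ℝ} (h : ∀ᶠ r in 𝓝[>] (0 : ℝ), a * r ≤ f (p + r • v) - f p) :
    a ≤ cDD f p v := by
  have hψ : Tendsto (fun r : ℝ => (p, r)) (𝓝[>] 0) (clarkeFilter p) :=
    tendsto_const_nhds.prodMk tendsto_id
  refine le_cDD_of_frequently hf hU (hψ.frequently (Eventually.frequently ?_))
  filter_upwards [h, self_mem_nhdsWithin] with r hr (hr₀ : 0 < r)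
  rwa [diffQuot, le_div_iff₀ hr₀]

theorem le_cDD_of_eventually_le_backward_diff (hf : LipschitzOnWith K f U) (hU : U ∈ 𝓝 p)
    {v : F} {a : ℝ} (h : ∀ᶠ r in 𝓝[>] (0 : ℝ), a * r ≤ f p - f (p - r • v)) :
    a ≤ cDD f p v := by
  have hψ : Tendsto (fun r : ℝ => (p - r • v, r)) (𝓝[>] 0) (clarkeFilter p) :=
    (((continuous_const.sub (continuous_id.smul continuous_const)).tendsto' 0 p
      (by simp)).mono_left nhdsWithin_le_nhds).prodMk tendsto_id
  refine le_cDD_of_frequently hf hU (hψ.frequently (Eventually.frequently ?_))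
  filter_upwards [h, self_mem_nhdsWithin] with r hr (hr₀ : 0 < r)
  rwa [diffQuot, sub_add_cancel, le_div_iff₀ hr₀]

theorem neg_mul_le_cDD_of_isLocalExtr (hf : LipschitzOnWith K f U) {x w : F} {c t₀ : ℝ}
    (hU : U ∈ 𝓝 (x + t₀ • w)) (hg : IsLocalExtr (fun t => f (x + t • w) + t * c) t₀) (s : ℝ) :
    -(s * c) ≤ cDD f (x + t₀ • w) (s • w) := by
  have hline (r σ : ℝ) : x + (t₀ + r * σ) • w = x + t₀ • w + r • σ • w := by
    rw [add_smul, mul_smul, add_assoc]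
  have hlim (σ : ℝ) : Tendsto (fun r : ℝ => t₀ + r * σ) (𝓝[>] 0) (𝓝 t₀) :=
    ((continuous_const.add (continuous_id.mul continuous_const)).tendsto' 0 t₀
      (by simp)).mono_left nhdsWithin_le_nhds
  refine hg.elim (fun hmin => le_cDD_of_eventually_le_forward_diff hf hU ?_)
    (fun hmax => le_cDD_of_eventually_le_backward_diff hf hU ?_)
  · filter_upwards [(hlim s).eventually hmin] with r hr
    rw [hline] at hr
    linarith
  · filter_upwards [(hlim (-s)).eventually hmax] with r hr
    rw [hline, neg_smul, smul_neg, ← sub_eq_add_neg] at hr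
    linarith

end NormedSpace

section InnerProductSpace

variable {E : Type*} [NormedAddCommGroup E] [InnerProductSpace ℝ E] [CompleteSpace E]
  {f : E → ℝ} {K : ℝ≥0} {U : Set E} {p : E}

theorem exists_mem_clarkeGrad_inner_eq (hf : LipschitzOnWith K f U) (hU : U ∈ 𝓝 p) {w : E}
    {r : ℝ} (h₁ : r ≤ cDD f p w) (h₂ : -r ≤ cDD f p (-w)) :
    ∃ ζ ∈ clarkeGrad f p, ⟪ζ, w⟫ = r := by
  obtain ⟨g, hg, hgw⟩ :=
    exists_linearMap_le_sublinear_apply_eq (fun _ hc => cDD_smul hf hU hc) (cDD_add_le_s16 hf hU) h₁ h₂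
  have hg_bound (v : E) : ‖g v‖ ≤ K * ‖v‖ := by
    have hneg := (hg (-v)).trans (cDD_le_mul_norm hf hU (-v))
    rw [map_neg, norm_neg] at hneg
    exact abs_le.2 ⟨by linarith, (hg v).trans (cDD_le_mul_norm hf hU v)⟩
  refine ⟨(InnerProductSpace.toDual ℝ E).symm (g.mkContinuous K hg_bound), fun v => ?_, ?_⟩
  · rw [InnerProductSpace.toDual_symm_apply]
    exact hg v
  · rw [InnerProductSpace.toDual_symm_apply]
    exact hgw

end InnerProductSpace

/-- (Mean value theorem for Clarke gradients.) If `f` is Lipschitz on a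
neighborhood of the segment `[x,y]`, then there is a point `z = x + t(y − x)`, `t ∈ (0,1)`,
in the open segment with `f(y) − f(x) ∈ ⟨∂f(z), y − x⟩`. -/
theorem clarke_mean_value {m : ℕ} (f : EuclideanSpace ℝ (Fin m) → ℝ)
    (x y : EuclideanSpace ℝ (Fin m))
    (hf : ∃ U : Set (EuclideanSpace ℝ (Fin m)), IsOpen U ∧ segment ℝ x y ⊆ U ∧
      ∃ K : NNReal, LipschitzOnWith K f U) :
    ∃ t ∈ Set.Ioo (0 : ℝ) 1,
      f y - f x ∈ {r : ℝ | ∃ ζ ∈ clarkeGrad f (x + t • (y - x)), r = ⟪ζ, y - x⟫} := by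
  obtain ⟨U, hU, hseg, K, hfU⟩ := hf
  have hline : Set.MapsTo (fun t : ℝ => x + t • (y - x)) (Set.Icc 0 1) U := fun t ht =>
    hseg (segment_eq_image' ℝ x y ▸ ⟨t, ht, rfl⟩)
  have hg : ContinuousOn (fun t : ℝ => f (x + t • (y - x)) + t * (f x - f y)) (Set.Icc 0 1) :=
    (hfU.continuousOn.comp (by fun_prop) hline).add (by fun_prop)
  obtain ⟨t₀, ht₀, hextr⟩ := exists_isLocalExtr_Ioo zero_lt_one hg (by simp)
  have hz : U ∈ 𝓝 (x + t₀ • (y - x)) := hU.mem_nhds (hline (Set.Ioo_subset_Icc_self ht₀))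
  have hbound := neg_mul_le_cDD_of_isLocalExtr hfU hz hextr
  obtain ⟨ζ, hζ, hζw⟩ := exists_mem_clarkeGrad_inner_eq hfU hz (r := f y - f x)
    (by simpa using hbound 1) (by simpa using hbound (-1))
  exact ⟨t₀, ht₀, ζ, hζ, hζw.symm⟩
end

section
/- Let Q : ℝ^q → ℝ be a nondegenerate quadratic form and let f : ℝ^q → ℝ be such that f − Q is (globally) Lipschitz. Then: (1) the critical set crit(f) = { ξ ∈ ℝ^q : 0 ∈ ∂f(ξ) } is compact; and (2) f satisfies the Palais–Smale condition: every sequence (ξ_n) in ℝ^q such that (f(ξ_n)) is bounded and λ(ξ_n) := min{ ‖w‖ : w ∈ ∂f(ξ_n) } → 0 has a subsequence converging to a critical point of f. -/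
open RealInnerProductSpace Filter Topology

namespace PSaux

lemma le_add_eps {a b : ℝ} (h : ∀ ε : ℝ, 0 < ε → a ≤ b + ε) : a ≤ b := by
  by_contra hc
  push_neg at hc
  have := h ((a - b) / 2) (by linarith)
  linarith

set_option linter.unusedSectionVars false
variable {E : Type*} [NormedAddCommGroup E] [InnerProductSpace ℝ E]

/-- The filter used in the Clarke derivative. -/
noncomputable def Fl (p : E) : Filter (E × ℝ) := (nhds p) ×ˢ (nhdsWithin 0 (Set.Ioi 0))

instance (p : E) : (Fl p).NeBot := by
  unfold Fl; infer_instance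

/-- The difference quotient. -/
noncomputable def dq (f : E → ℝ) (v : E) (qt : E × ℝ) : ℝ := (f (qt.1 + qt.2 • v) - f qt.1) / qt.2

lemma cDD_eq (f : E → ℝ) (p v : E) : cDD f p v = limsup (dq f v) (Fl p) := rfl

lemma ev_pos (p : E) : ∀ᶠ qt : E × ℝ in Fl p, 0 < qt.2 :=
  Filter.tendsto_snd.eventually eventually_mem_nhdsWithin

lemma dq_lip {K : NNReal} {g : E → ℝ} (hg : LipschitzWith K g) (v : E) {qt : E × ℝ}
    (ht : 0 < qt.2) : |dq g v qt| ≤ K * ‖v‖ := by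
  have h1 : |g (qt.1 + qt.2 • v) - g qt.1| ≤ K * (|qt.2| * ‖v‖) := by
    have h := hg.dist_le_mul (qt.1 + qt.2 • v) qt.1
    rw [Real.dist_eq, dist_eq_norm, add_sub_cancel_left, norm_smul] at h
    simpa using h
  rw [dq, abs_div, abs_of_pos ht, div_le_iff₀ ht]
  rw [abs_of_pos ht] at h1
  calc |g (qt.1 + qt.2 • v) - g qt.1| ≤ K * (qt.2 * ‖v‖) := h1
    _ = K * ‖v‖ * qt.2 := by ring

lemma ev_dq_le {K : NNReal} {g : E → ℝ} (hg : LipschitzWith K g) (p v : E) :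
    ∀ᶠ qt in Fl p, dq g v qt ≤ K * ‖v‖ :=
  (ev_pos p).mono fun _ ht => (abs_le.1 (dq_lip hg v ht)).2

lemma ev_dq_ge {K : NNReal} {g : E → ℝ} (hg : LipschitzWith K g) (p v : E) :
    ∀ᶠ qt in Fl p, -(K * ‖v‖) ≤ dq g v qt :=
  (ev_pos p).mono fun _ ht => (abs_le.1 (dq_lip hg v ht)).1

lemma dq_bddAbove {K : NNReal} {g : E → ℝ} (hg : LipschitzWith K g) (p v : E) :
    IsBoundedUnder (· ≤ ·) (Fl p) (dq g v) :=
  ⟨K * ‖v‖, by rw [eventually_map]; exact ev_dq_le hg p v⟩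

lemma cDD_g_le {K : NNReal} {g : E → ℝ} (hg : LipschitzWith K g) (p v : E) :
    cDD g p v ≤ K * ‖v‖ := by
  rw [cDD_eq]
  exact limsup_le_of_le (isCoboundedUnder_le_of_eventually_le _ (ev_dq_ge hg p v))
    (ev_dq_le hg p v)

lemma cDD_g_ge {K : NNReal} {g : E → ℝ} (hg : LipschitzWith K g) (p v : E) :
    -(K * ‖v‖) ≤ cDD g p v := by
  rw [cDD_eq]
  exact le_limsup_of_frequently_le ((ev_dq_ge hg p v).frequently) (dq_bddAbove hg p v)

lemma cDD_zero (g : E → ℝ) (p : E) : cDD g p 0 = 0 := by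
  have : (fun qt : E × ℝ => (g (qt.1 + qt.2 • (0 : E)) - g qt.1) / qt.2)
      = fun _ => (0 : ℝ) := by
    funext qt; simp
  rw [cDD, this]
  exact limsup_const 0

lemma tendsto_shift (p v : E) :
    Tendsto (fun qt : E × ℝ => (qt.1 + qt.2 • v, qt.2)) (Fl p) (Fl p) := by
  refine Filter.Tendsto.prodMk ?_ Filter.tendsto_snd
  have h1 : Tendsto (fun qt : E × ℝ => qt.1 + qt.2 • v) (Fl p) (nhds (p + (0 : ℝ) • v)) :=
    Filter.tendsto_fst.add ((Filter.tendsto_snd.mono_right nhdsWithin_le_nhds).smul_const v)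
  simpa using h1

lemma cDD_add_le {K : NNReal} {g : E → ℝ} (hg : LipschitzWith K g) (p u v : E) :
    cDD g p (u + v) ≤ cDD g p u + cDD g p v := by
  rw [cDD_eq]
  refine le_add_eps fun ε hε => ?_
  have h1 : ∀ᶠ qt in Fl p, dq g u qt < cDD g p u + ε / 2 := by
    refine eventually_lt_of_limsup_lt ?_ (dq_bddAbove hg p u)
    rw [← cDD_eq]; linarith
  have h1' : ∀ᶠ qt in Fl p, dq g u (qt.1 + qt.2 • v, qt.2) < cDD g p u + ε / 2 :=
    (tendsto_shift p v).eventually h1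
  have h2 : ∀ᶠ qt in Fl p, dq g v qt < cDD g p v + ε / 2 := by
    refine eventually_lt_of_limsup_lt ?_ (dq_bddAbove hg p v)
    rw [← cDD_eq]; linarith
  have key : ∀ᶠ qt in Fl p, dq g (u + v) qt ≤ cDD g p u + cDD g p v + ε := by
    filter_upwards [h1', h2, ev_pos p] with qt ha hb hc
    have e1 : qt.1 + qt.2 • (u + v) = (qt.1 + qt.2 • v) + qt.2 • u := by
      rw [smul_add]; abel
    have hde : dq g (u + v) qt = dq g u (qt.1 + qt.2 • v, qt.2) + dq g v qt := by
      simp only [dq, e1]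
      rw [← sub_add_sub_cancel (g ((qt.1 + qt.2 • v) + qt.2 • u)) (g (qt.1 + qt.2 • v)) (g qt.1),
        add_div]
    rw [hde]; linarith
  exact limsup_le_of_le (isCoboundedUnder_le_of_eventually_le _ (ev_dq_ge hg p (u + v))) key

lemma tendsto_scale (p : E) {c : ℝ} (hc : 0 < c) :
    Tendsto (fun qt : E × ℝ => (qt.1, c * qt.2)) (Fl p) (Fl p) := by
  refine Filter.Tendsto.prodMk Filter.tendsto_fst ?_
  refine tendsto_nhdsWithin_of_tendsto_nhds_of_eventually_within _ ?_ ?_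
  · have h : Tendsto (fun qt : E × ℝ => qt.2) (Fl p) (nhds (0 : ℝ)) :=
      Filter.tendsto_snd.mono_right nhdsWithin_le_nhds
    simpa using h.const_mul c
  · exact (ev_pos p).mono fun qt ht => mul_pos hc ht

lemma cDD_smul_le {K : NNReal} {g : E → ℝ} (hg : LipschitzWith K g) (p v : E) {c : ℝ}
    (hc : 0 < c) : cDD g p (c • v) ≤ c * cDD g p v := by
  rw [cDD_eq]
  refine le_add_eps fun ε hε => ?_
  have h1 : ∀ᶠ qt in Fl p, dq g v qt < cDD g p v + ε / c := by
    refine eventually_lt_of_limsup_lt ?_ (dq_bddAbove hg p v)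
    rw [← cDD_eq]
    have : 0 < ε / c := div_pos hε hc
    linarith
  have h1' : ∀ᶠ qt in Fl p, dq g v (qt.1, c * qt.2) < cDD g p v + ε / c :=
    (tendsto_scale p hc).eventually h1
  have key : ∀ᶠ qt in Fl p, dq g (c • v) qt ≤ c * cDD g p v + ε := by
    filter_upwards [h1', ev_pos p] with qt ha ht
    have e : dq g (c • v) qt = c * dq g v (qt.1, c * qt.2) := by
      simp only [dq]
      have hsm : qt.2 • (c • v) = (c * qt.2) • v := by
        rw [smul_smul, mul_comm]
      rw [hsm]
      field_simp
    rw [e]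
    calc c * dq g v (qt.1, c * qt.2) ≤ c * (cDD g p v + ε / c) :=
          mul_le_mul_of_nonneg_left ha.le hc.le
      _ = c * cDD g p v + ε := by field_simp
  exact limsup_le_of_le (isCoboundedUnder_le_of_eventually_le _ (ev_dq_ge hg p (c • v))) key

lemma cDD_smul {K : NNReal} {g : E → ℝ} (hg : LipschitzWith K g) (p v : E) {c : ℝ}
    (hc : 0 < c) : cDD g p (c • v) = c * cDD g p v := by
  refine le_antisymm (cDD_smul_le hg p v hc) ?_
  have h := cDD_smul_le hg p (c • v) (inv_pos.mpr hc)
  rw [smul_smul, inv_mul_cancel₀ hc.ne', one_smul] at h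
  have := mul_le_mul_of_nonneg_left h hc.le
  calc c * cDD g p v ≤ c * (c⁻¹ * cDD g p (c • v)) := this
    _ = cDD g p (c • v) := by field_simp

lemma clarke_g_nonempty [FiniteDimensional ℝ E] {K : NNReal} {g : E → ℝ}
    (hg : LipschitzWith K g) (p : E) : ∃ ζ : E, ∀ v, ⟪ζ, v⟫ ≤ cDD g p v := by
  obtain ⟨gl, -, hgl⟩ := exists_extension_of_le_sublinear ⟨⊥, 0⟩ (fun v => cDD g p v)
    (fun c hc x => cDD_smul hg p x hc) (fun x y => cDD_add_le hg p x y)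
    (fun x => by
      have hx : (x : E) = 0 := (Submodule.mem_bot ℝ).mp x.2
      simp [hx, cDD_zero g p])
  haveI : CompleteSpace E := FiniteDimensional.complete ℝ E
  refine ⟨(InnerProductSpace.toDual ℝ E).symm (LinearMap.toContinuousLinearMap gl),
    fun v => ?_⟩
  rw [InnerProductSpace.toDual_symm_apply]
  exact hgl v


section Bpart

variable (B : E →L[ℝ] E)

lemma dq_decomp (hBsymm : ∀ u v : E, ⟪B u, v⟫ = ⟪u, B v⟫) {g f : E → ℝ}
    (hf : ∀ x, f x = 1 / 2 * ⟪B x, x⟫ + g x) (v : E) {qt : E × ℝ} (ht : 0 < qt.2) :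
    dq f v qt = ⟪B qt.1, v⟫ + qt.2 / 2 * ⟪B v, v⟫ + dq g v qt := by
  obtain ⟨q, t⟩ := qt
  simp only [dq]
  simp only at ht
  have hexp : ⟪B (q + t • v), q + t • v⟫
      = ⟪B q, q⟫ + 2 * t * ⟪B q, v⟫ + t ^ 2 * ⟪B v, v⟫ := by
    have hcomm : ⟪B v, q⟫ = ⟪B q, v⟫ := by rw [hBsymm v q, real_inner_comm]
    simp only [map_add, map_smul, inner_add_left, inner_add_right, real_inner_smul_left,
      real_inner_smul_right]
    rw [hcomm]; ring
  rw [hf, hf, hexp]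
  have htne : t ≠ 0 := ht.ne'
  field_simp
  ring

lemma tendsto_lin (p v : E) :
    Tendsto (fun qt : E × ℝ => ⟪B qt.1, v⟫ + qt.2 / 2 * ⟪B v, v⟫) (Fl p)
      (nhds ⟪B p, v⟫) := by
  have hle : Fl p ≤ nhds (p, (0 : ℝ)) := by
    rw [Fl, nhds_prod_eq]; exact Filter.prod_mono le_rfl nhdsWithin_le_nhds
  have hc : Continuous fun qt : E × ℝ => ⟪B qt.1, v⟫ + qt.2 / 2 * ⟪B v, v⟫ :=
    (Continuous.inner (B.continuous.comp continuous_fst) continuous_const).add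
      ((continuous_snd.div_const 2).mul continuous_const)
  have := (hc.tendsto (p, (0 : ℝ))).mono_left hle
  simpa using this

variable {K : NNReal} {g f : E → ℝ}

lemma ev_dqf_le (hBsymm : ∀ u v : E, ⟪B u, v⟫ = ⟪u, B v⟫) (hg : LipschitzWith K g)
    (hf : ∀ x, f x = 1 / 2 * ⟪B x, x⟫ + g x) (p v : E) :
    ∀ᶠ qt in Fl p, dq f v qt ≤ ⟪B p, v⟫ + 1 + K * ‖v‖ := by
  have h1 : ∀ᶠ qt in Fl p, ⟪B qt.1, v⟫ + qt.2 / 2 * ⟪B v, v⟫ < ⟪B p, v⟫ + 1 :=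
    (tendsto_lin B p v).eventually_lt_const (lt_add_one _)
  filter_upwards [h1, ev_dq_le hg p v, ev_pos p] with qt ha hb hc
  rw [dq_decomp B hBsymm hf v hc]; linarith

lemma ev_dqf_ge (hBsymm : ∀ u v : E, ⟪B u, v⟫ = ⟪u, B v⟫) (hg : LipschitzWith K g)
    (hf : ∀ x, f x = 1 / 2 * ⟪B x, x⟫ + g x) (p v : E) :
    ∀ᶠ qt in Fl p, ⟪B p, v⟫ - 1 - K * ‖v‖ ≤ dq f v qt := by
  have h1 : ∀ᶠ qt in Fl p, ⟪B p, v⟫ - 1 < ⟪B qt.1, v⟫ + qt.2 / 2 * ⟪B v, v⟫ :=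
    (tendsto_lin B p v).eventually_const_lt (sub_one_lt _)
  filter_upwards [h1, ev_dq_ge hg p v, ev_pos p] with qt ha hb hc
  rw [dq_decomp B hBsymm hf v hc]; linarith

lemma dqf_bddAbove (hBsymm : ∀ u v : E, ⟪B u, v⟫ = ⟪u, B v⟫) (hg : LipschitzWith K g)
    (hf : ∀ x, f x = 1 / 2 * ⟪B x, x⟫ + g x) (p v : E) :
    IsBoundedUnder (· ≤ ·) (Fl p) (dq f v) :=
  ⟨⟪B p, v⟫ + 1 + K * ‖v‖, by rw [eventually_map]; exact ev_dqf_le B hBsymm hg hf p v⟩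

lemma cDD_f_le (hBsymm : ∀ u v : E, ⟪B u, v⟫ = ⟪u, B v⟫) (hg : LipschitzWith K g)
    (hf : ∀ x, f x = 1 / 2 * ⟪B x, x⟫ + g x) (p v : E) :
    cDD f p v ≤ ⟪B p, v⟫ + K * ‖v‖ := by
  rw [cDD_eq]
  refine le_add_eps fun ε hε => ?_
  have h1 : ∀ᶠ qt in Fl p, ⟪B qt.1, v⟫ + qt.2 / 2 * ⟪B v, v⟫ < ⟪B p, v⟫ + ε :=
    (tendsto_lin B p v).eventually_lt_const (by linarith)
  refine limsup_le_of_le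
    (isCoboundedUnder_le_of_eventually_le _ (ev_dqf_ge B hBsymm hg hf p v)) ?_
  filter_upwards [h1, ev_dq_le hg p v, ev_pos p] with qt ha hb hc
  rw [dq_decomp B hBsymm hf v hc]; linarith

lemma cDD_f_ge (hBsymm : ∀ u v : E, ⟪B u, v⟫ = ⟪u, B v⟫) (hg : LipschitzWith K g)
    (hf : ∀ x, f x = 1 / 2 * ⟪B x, x⟫ + g x) (p v : E) :
    ⟪B p, v⟫ + cDD g p v ≤ cDD f p v := by
  refine le_add_eps fun ε hε => ?_
  have hfreq : ∃ᶠ qt in Fl p, cDD g p v - ε / 2 < dq g v qt := by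
    refine frequently_lt_of_lt_limsup
      (isCoboundedUnder_le_of_eventually_le _ (ev_dq_ge hg p v)) ?_
    rw [← cDD_eq]; linarith
  have hev : ∀ᶠ qt in Fl p,
      (⟪B p, v⟫ - ε / 2 < ⟪B qt.1, v⟫ + qt.2 / 2 * ⟪B v, v⟫) ∧ 0 < qt.2 :=
    ((tendsto_lin B p v).eventually_const_lt (by linarith)).and (ev_pos p)
  have hfreq2 : ∃ᶠ qt in Fl p, ⟪B p, v⟫ + cDD g p v - ε ≤ dq f v qt := by
    refine (hfreq.and_eventually hev).mono ?_
    rintro qt ⟨h1, h2, h3⟩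
    rw [dq_decomp B hBsymm hf v h3]; linarith
  have hle := le_limsup_of_frequently_le hfreq2 (dqf_bddAbove B hBsymm hg hf p v)
  rw [← cDD_eq] at hle; linarith

lemma cDD_f_usc (hBsymm : ∀ u v : E, ⟪B u, v⟫ = ⟪u, B v⟫) (hg : LipschitzWith K g)
    (hf : ∀ x, f x = 1 / 2 * ⟪B x, x⟫ + g x) (p v : E) {a : ℝ} (h : cDD f p v < a) :
    ∀ᶠ p' in nhds p, cDD f p' v ≤ a := by
  have hev : ∀ᶠ qt in Fl p, dq f v qt < a := by
    rw [cDD_eq] at h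
    exact eventually_lt_of_limsup_lt h (dqf_bddAbove B hBsymm hg hf p v)
  rw [Fl, eventually_prod_iff] at hev
  obtain ⟨pa, hpa, pb, hpb, hab⟩ := hev
  rw [Filter.eventually_iff] at hpa
  obtain ⟨O, hOsub, hOopen, hpO⟩ := mem_nhds_iff.mp hpa
  filter_upwards [hOopen.mem_nhds hpO] with p' hp'
  have hev' : ∀ᶠ qt in Fl p', dq f v qt < a := by
    rw [Fl, eventually_prod_iff]
    exact ⟨pa, Filter.mem_of_superset (hOopen.mem_nhds hp') hOsub, pb, hpb, hab⟩
  rw [cDD_eq]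
  exact limsup_le_of_le
    (isCoboundedUnder_le_of_eventually_le _ (ev_dqf_ge B hBsymm hg hf p' v))
    (hev'.mono fun _ hqt => hqt.le)

end Bpart

end PSaux

/-- If `Q(ξ) = ½⟨Bξ, ξ⟩` is a nondegenerate quadratic form and `f − Q` is
globally Lipschitz, then the critical set `{ξ : 0 ∈ ∂f(ξ)}` is compact, and `f` satisfies the
Palais–Smale condition: any sequence with `f(ξ_n)` bounded and
`λ(ξ_n) = inf{‖w‖ : w ∈ ∂f(ξ_n)} → 0` has a subsequence converging to a critical point. -/
theorem palais_smale_for_quadratic_plus_lipschitz {q : ℕ}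
    (B : EuclideanSpace ℝ (Fin q) →L[ℝ] EuclideanSpace ℝ (Fin q))
    (hBsymm : ∀ u v : EuclideanSpace ℝ (Fin q), ⟪B u, v⟫ = ⟪u, B v⟫)
    (hBbij : Function.Bijective B)
    (Q f : EuclideanSpace ℝ (Fin q) → ℝ)
    (hQ : ∀ ξ, Q ξ = (1 / 2) * ⟪B ξ, ξ⟫)
    (hLip : ∃ K : NNReal, LipschitzWith K fun ξ => f ξ - Q ξ) :
    IsCompact {ξ : EuclideanSpace ℝ (Fin q) | 0 ∈ clarkeGrad f ξ} ∧
    ∀ ξ : ℕ → EuclideanSpace ℝ (Fin q),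
      (∃ C : ℝ, ∀ n, |f (ξ n)| ≤ C) →
      Filter.Tendsto (fun n => sInf {r : ℝ | ∃ w ∈ clarkeGrad f (ξ n), r = ‖w‖})
        Filter.atTop (nhds 0) →
      ∃ φ : ℕ → ℕ, StrictMono φ ∧
        ∃ ξ' : EuclideanSpace ℝ (Fin q), 0 ∈ clarkeGrad f ξ' ∧
          Filter.Tendsto (ξ ∘ φ) Filter.atTop (nhds ξ') := by
  classical
  obtain ⟨K, hK⟩ := hLip
  set g : EuclideanSpace ℝ (Fin q) → ℝ := fun ξ => f ξ - Q ξ with hg_def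
  have hKg : LipschitzWith K g := hK
  have hf : ∀ x, f x = 1 / 2 * ⟪B x, x⟫ + g x := fun x => by
    rw [hg_def]; rw [← hQ x]; ring
  have hBlin : Function.Bijective ((B : EuclideanSpace ℝ (Fin q) →ₗ[ℝ]
      EuclideanSpace ℝ (Fin q)) : EuclideanSpace ℝ (Fin q) → EuclideanSpace ℝ (Fin q)) := by
    simpa using hBbij
  let e := (LinearEquiv.ofBijective
    (B : EuclideanSpace ℝ (Fin q) →ₗ[ℝ] EuclideanSpace ℝ (Fin q)) hBlin).toContinuousLinearEquiv
  set M := ‖e.symm.toContinuousLinearMap‖ with hM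
  have hMnonneg : 0 ≤ M := norm_nonneg _
  have hinv : ∀ ξ, ‖ξ‖ ≤ M * ‖B ξ‖ := fun ξ => by
    have h1 : e.symm (B ξ) = ξ := by
      have h0 : e ξ = B ξ := rfl
      rw [← h0]; exact e.symm_apply_apply ξ
    calc ‖ξ‖ = ‖e.symm (B ξ)‖ := by rw [h1]
      _ ≤ M * ‖B ξ‖ := e.symm.toContinuousLinearMap.le_opNorm _
  have hgradbound : ∀ ξ w, w ∈ clarkeGrad f ξ → ‖B ξ‖ ≤ K + ‖w‖ := by
    intro ξ w hw
    have h1 : ∀ v, ⟪w - B ξ, v⟫ ≤ K * ‖v‖ := fun v => by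
      have ha := hw v
      have h2 := PSaux.cDD_f_le B hBsymm hKg hf ξ v
      rw [inner_sub_left]; linarith
    have h3 : ‖w - B ξ‖ ≤ K := by
      rcases eq_or_ne (w - B ξ) 0 with h | h
      · rw [h, norm_zero]; exact K.coe_nonneg
      · have h4 := h1 (w - B ξ)
        rw [real_inner_self_eq_norm_sq] at h4
        have hn : 0 < ‖w - B ξ‖ := norm_pos_iff.mpr h
        nlinarith
    calc ‖B ξ‖ = ‖w - (w - B ξ)‖ := by congr 1; abel
      _ ≤ ‖w‖ + ‖w - B ξ‖ := norm_sub_le _ _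
      _ ≤ K + ‖w‖ := by linarith
  have hcrit : ∀ ξ, 0 ∈ clarkeGrad f ξ ↔ ∀ v, (0 : ℝ) ≤ cDD f ξ v := by
    intro ξ
    constructor
    · intro h v; have := h v; rwa [inner_zero_left] at this
    · intro h v; rw [inner_zero_left]; exact h v
  constructor
  · refine Metric.isCompact_of_isClosed_isBounded ?_ ?_
    · rw [← isOpen_compl_iff, isOpen_iff_mem_nhds]
      intro ξ hξ
      rw [Set.mem_compl_iff, Set.mem_setOf_eq, hcrit] at hξ
      push_neg at hξ
      obtain ⟨v, hv⟩ := hξ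
      have husc := PSaux.cDD_f_usc B hBsymm hKg hf ξ v
        (show cDD f ξ v < cDD f ξ v / 2 by linarith)
      have hmem : ∀ᶠ p' in nhds ξ,
          p' ∈ {ξ : EuclideanSpace ℝ (Fin q) | 0 ∈ clarkeGrad f ξ}ᶜ := by
        filter_upwards [husc] with p' hp'
        rw [Set.mem_compl_iff, Set.mem_setOf_eq, hcrit]
        push_neg
        exact ⟨v, by linarith⟩
      exact hmem
    · refine (Metric.isBounded_closedBall (x := (0 : EuclideanSpace ℝ (Fin q)))
        (r := M * K)).subset ?_
      intro ξ hξ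
      have h1 := hgradbound ξ 0 hξ
      rw [norm_zero, add_zero] at h1
      rw [Metric.mem_closedBall, dist_zero_right]
      calc ‖ξ‖ ≤ M * ‖B ξ‖ := hinv ξ
        _ ≤ M * K := mul_le_mul_of_nonneg_left h1 hMnonneg
  · intro ξs hCb hlam
    have hW : ∀ n : ℕ, ∃ w, w ∈ clarkeGrad f (ξs n) ∧
        ‖w‖ < sInf {r : ℝ | ∃ w ∈ clarkeGrad f (ξs n), r = ‖w‖} + 1 / (n + 1) := by
      intro n
      have hne : {r : ℝ | ∃ w ∈ clarkeGrad f (ξs n), r = ‖w‖}.Nonempty := by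
        obtain ⟨ζ, hζ⟩ := PSaux.clarke_g_nonempty hKg (ξs n)
        refine ⟨‖B (ξs n) + ζ‖, B (ξs n) + ζ, ?_, rfl⟩
        intro v
        have h1 := PSaux.cDD_f_ge B hBsymm hKg hf (ξs n) v
        have h2 := hζ v
        rw [inner_add_left]
        linarith
      have hpos : (0 : ℝ) < 1 / (n + 1) := by positivity
      have hlt : sInf {r : ℝ | ∃ w ∈ clarkeGrad f (ξs n), r = ‖w‖}
          < sInf {r : ℝ | ∃ w ∈ clarkeGrad f (ξs n), r = ‖w‖} + 1 / (n + 1) := by linarith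
      obtain ⟨r, hrS, hr⟩ := exists_lt_of_csInf_lt hne hlt
      obtain ⟨w, hwmem, rfl⟩ := hrS
      exact ⟨w, hwmem, hr⟩
    choose w hwmem hwlt using hW
    have hw0 : Filter.Tendsto (fun n => ‖w n‖) Filter.atTop (nhds 0) := by
      have hub : Filter.Tendsto
          (fun n : ℕ => sInf {r : ℝ | ∃ w ∈ clarkeGrad f (ξs n), r = ‖w‖} + 1 / (n + 1))
          Filter.atTop (nhds 0) := by
        have := hlam.add tendsto_one_div_add_atTop_nhds_zero_nat
        simpa using this
      exact squeeze_zero (fun n => norm_nonneg _) (fun n => (hwlt n).le) hub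
    have hnormb : ∀ n, ‖ξs n‖ ≤ M * (K + ‖w n‖) := fun n => by
      have h1 := hgradbound (ξs n) (w n) (hwmem n)
      calc ‖ξs n‖ ≤ M * ‖B (ξs n)‖ := hinv _
        _ ≤ M * (K + ‖w n‖) := mul_le_mul_of_nonneg_left h1 hMnonneg
    have hfreqb : ∃ᶠ n in Filter.atTop,
        ξs n ∈ Metric.closedBall (0 : EuclideanSpace ℝ (Fin q)) (M * (K + 1)) := by
      have hev1 : ∀ᶠ n in Filter.atTop, ‖w n‖ < 1 := hw0.eventually_lt_const one_pos
      refine (hev1.mono ?_).frequently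
      intro n hn
      rw [Metric.mem_closedBall, dist_zero_right]
      calc ‖ξs n‖ ≤ M * (K + ‖w n‖) := hnormb n
        _ ≤ M * (K + 1) := mul_le_mul_of_nonneg_left (by linarith) hMnonneg
    obtain ⟨a, -, φ, hφ, hconv⟩ :=
      tendsto_subseq_of_frequently_bounded Metric.isBounded_closedBall hfreqb
    refine ⟨φ, hφ, a, ?_, hconv⟩
    rw [hcrit]
    intro v
    by_contra hneg
    push_neg at hneg
    have husc := PSaux.cDD_f_usc B hBsymm hKg hf a v
      (show cDD f a v < cDD f a v / 2 by linarith)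
    have hev2 : ∀ᶠ n in Filter.atTop, cDD f (ξs (φ n)) v ≤ cDD f a v / 2 :=
      hconv.eventually husc
    have hwφ : Filter.Tendsto (fun n => -(‖w (φ n)‖ * ‖v‖)) Filter.atTop (nhds 0) := by
      have h1 : Filter.Tendsto (fun n => ‖w (φ n)‖) Filter.atTop (nhds 0) :=
        hw0.comp hφ.tendsto_atTop
      have h2 := (h1.mul_const ‖v‖).neg
      simpa using h2
    have hev3 : ∀ᶠ n in Filter.atTop, cDD f a v / 2 < -(‖w (φ n)‖ * ‖v‖) :=
      hwφ.eventually_const_lt (by linarith)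
    obtain ⟨n, h2, h3⟩ := (hev2.and hev3).exists
    have h4 : ⟪w (φ n), v⟫ ≤ cDD f (ξs (φ n)) v := hwmem (φ n) v
    have h5 : -(‖w (φ n)‖ * ‖v‖) ≤ ⟪w (φ n), v⟫ := by
      linarith [abs_real_inner_le_norm (w (φ n)) v, neg_abs_le ⟪w (φ n), v⟫]
    linarith
end
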